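/- arXiv:1802.00238 — 7 statements merged into one kernel-verified Lean document; each statement's English description precedes it below -/
import Mathlib

section
/- Let 𝓜 be a complex Banach algebra isomorphic (as an algebra) to the full matrix algebra M_k(ℂ) for some k, let Y be a Banach space, let n be a positive integer, and let P : 𝓜 → Y be an orthogonally additive n-homogeneous polynomial. Then there exists a unique linear map Φ : 𝓜 → Y such that P(a) = Φ(aⁿ) for every a ∈ 𝓜. -/
open Polynomial Finset

section PolyFun

variable {V W : Type*} [AddCommGroup V] [Module ℂ V] [AddCommGroup W] [Module ℂ W]

/-- Functions `ℂ → V` given by a "polynomial" with vector coefficients. -/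
def IsPolyFun (g : ℂ → V) : Prop :=
  ∃ N : ℕ, ∃ y : ℕ → V, ∀ t, g t = ∑ j ∈ Finset.range N, t ^ j • y j

lemma IsPolyFun.exists_rep {g : ℂ → V} (h : IsPolyFun g) :
    ∃ N₀, ∀ N, N₀ ≤ N → ∃ y : ℕ → V, ∀ t, g t = ∑ j ∈ Finset.range N, t ^ j • y j := by
  obtain ⟨N₀, y, hy⟩ := h
  refine ⟨N₀, fun N hN => ⟨fun j => if j < N₀ then y j else 0, fun t => ?_⟩⟩
  rw [hy t, ← Finset.sum_subset (Finset.range_subset_range.2 hN)]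
  · refine Finset.sum_congr rfl fun j hj => ?_
    simp only [Finset.mem_range] at hj
    simp [hj]
  · intro j _ hj
    simp only [Finset.mem_range] at hj
    simp [hj]

lemma isPolyFun_monomial (c : ℕ) (v : V) : IsPolyFun (fun t => t ^ c • v) := by
  refine ⟨c + 1, fun j => if j = c then v else 0, fun t => ?_⟩
  simp only [smul_ite, smul_zero]
  rw [Finset.sum_ite_eq' (Finset.range (c + 1)) c (fun j => t ^ j • v)]
  simp

lemma isPolyFun_const (v : V) : IsPolyFun (fun _ => v) := by
  simpa using isPolyFun_monomial 0 v

lemma isPolyFun_zero : IsPolyFun (fun _ : ℂ => (0 : V)) := isPolyFun_const 0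

lemma IsPolyFun.add {g₁ g₂ : ℂ → V} (h₁ : IsPolyFun g₁) (h₂ : IsPolyFun g₂) :
    IsPolyFun (fun t => g₁ t + g₂ t) := by
  obtain ⟨N₁, h₁'⟩ := h₁.exists_rep
  obtain ⟨N₂, h₂'⟩ := h₂.exists_rep
  obtain ⟨y₁, hy₁⟩ := h₁' (max N₁ N₂) (le_max_left _ _)
  obtain ⟨y₂, hy₂⟩ := h₂' (max N₁ N₂) (le_max_right _ _)
  refine ⟨max N₁ N₂, fun j => y₁ j + y₂ j, fun t => ?_⟩
  simp [hy₁ t, hy₂ t, ← Finset.sum_add_distrib, smul_add]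

lemma IsPolyFun.neg {g : ℂ → V} (h : IsPolyFun g) : IsPolyFun (fun t => -(g t)) := by
  obtain ⟨N, y, hy⟩ := h
  exact ⟨N, fun j => -(y j), fun t => by simp [hy t]⟩

lemma IsPolyFun.sub {g₁ g₂ : ℂ → V} (h₁ : IsPolyFun g₁) (h₂ : IsPolyFun g₂) :
    IsPolyFun (fun t => g₁ t - g₂ t) := by
  simpa [sub_eq_add_neg] using h₁.add h₂.neg

lemma IsPolyFun.linear (L : V →ₗ[ℂ] W) {g : ℂ → V} (h : IsPolyFun g) :
    IsPolyFun (fun t => L (g t)) := by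
  obtain ⟨N, y, hy⟩ := h
  exact ⟨N, fun j => L (y j), fun t => by simp [hy t]⟩

lemma isPolyFun_sum {ι : Type*} (s : Finset ι) (g : ι → ℂ → V)
    (h : ∀ i ∈ s, IsPolyFun (g i)) : IsPolyFun (fun t => ∑ i ∈ s, g i t) := by
  classical
  induction s using Finset.induction_on with
  | empty => simpa using isPolyFun_zero
  | @insert a s' hx ih =>
    simp only [Finset.sum_insert hx]
    exact (h a (Finset.mem_insert_self _ _)).add
      (ih fun i hi => h i (Finset.mem_insert_of_mem hi))

lemma IsPolyFun.mul {A : Type*} [Ring A] [Algebra ℂ A] {g₁ g₂ : ℂ → A}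
    (h₁ : IsPolyFun g₁) (h₂ : IsPolyFun g₂) : IsPolyFun (fun t => g₁ t * g₂ t) := by
  obtain ⟨N₁, y₁, hy₁⟩ := h₁
  obtain ⟨N₂, y₂, hy₂⟩ := h₂
  have : (fun t => g₁ t * g₂ t)
      = fun t => ∑ j ∈ Finset.range N₁, ∑ l ∈ Finset.range N₂, t ^ (j + l) • (y₁ j * y₂ l) := by
    funext t
    rw [hy₁ t, hy₂ t, Finset.sum_mul_sum]
    refine Finset.sum_congr rfl fun j _ => Finset.sum_congr rfl fun l _ => ?_
    rw [smul_mul_smul_comm, pow_add]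
  rw [this]
  exact isPolyFun_sum _ _ fun j _ => isPolyFun_sum _ _ fun l _ => isPolyFun_monomial _ _

lemma IsPolyFun.pow {A : Type*} [Ring A] [Algebra ℂ A] {g : ℂ → A}
    (h : IsPolyFun g) (m : ℕ) : IsPolyFun (fun t => g t ^ m) := by
  induction m with
  | zero => simpa using isPolyFun_const (1 : A)
  | succ m ih => simpa [pow_succ] using ih.mul h

/-- Coefficients of a vector-valued polynomial identity vanishing on an infinite set. -/
lemma polyfun_coeff_eq_zero {N : ℕ} {y : ℕ → V} {S : Set ℂ} (hS : S.Infinite)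
    (hz : ∀ t ∈ S, ∑ j ∈ Finset.range N, t ^ j • y j = 0) :
    ∀ j, j < N → y j = 0 := by
  intro j hj
  rw [← Module.forall_dual_apply_eq_zero_iff ℂ]
  intro f
  have hp : (∑ i ∈ Finset.range N, C (f (y i)) * X ^ i : ℂ[X]) = 0 := by
    apply Polynomial.eq_zero_of_infinite_isRoot
    apply hS.mono
    intro t ht
    have h0 := congrArg f (hz t ht)
    simp only [map_sum, map_smul, smul_eq_mul, map_zero] at h0
    simp only [Set.mem_setOf_eq, IsRoot, eval_finset_sum, eval_mul, eval_C, eval_pow, eval_X]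
    rw [← h0]
    exact Finset.sum_congr rfl fun i _ => mul_comm _ _
  have h2 := congrArg (fun p => Polynomial.coeff p j) hp
  simp only [Polynomial.finset_sum_coeff, Polynomial.coeff_C_mul, Polynomial.coeff_X_pow,
    Polynomial.coeff_zero, mul_ite, mul_one, mul_zero] at h2
  rwa [Finset.sum_ite_eq (Finset.range N) j (fun i => f (y i)), if_pos (Finset.mem_range.2 hj)]
    at h2

/-- A vector-valued polynomial function vanishing on an infinite set vanishes identically. -/
lemma IsPolyFun.eq_zero_of_infinite {g : ℂ → V} (h : IsPolyFun g) {S : Set ℂ}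
    (hS : S.Infinite) (hz : ∀ t ∈ S, g t = 0) : ∀ t, g t = 0 := by
  obtain ⟨N, y, hy⟩ := h
  have hcoeff := polyfun_coeff_eq_zero hS (fun t ht => (hy t).symm.trans (hz t ht))
  intro t
  rw [hy t]
  refine Finset.sum_eq_zero fun j hj => ?_
  rw [hcoeff j (Finset.mem_range.1 hj), smul_zero]

end PolyFun

section Expand

variable {𝓜 Y : Type*} [Ring 𝓜] [Algebra ℂ 𝓜] [AddCommGroup Y] [Module ℂ Y]
variable {n : ℕ} (φ : MultilinearMap ℂ (fun _ : Fin n => 𝓜) Y)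

/-- Expansion of `φ` along `t • x + z` as a polynomial function of `t`. -/
lemma expand_eval (x z : 𝓜) (t : ℂ) :
    φ (fun _ => t • x + z)
      = ∑ j ∈ Finset.range (n + 1), t ^ j •
          ∑ s ∈ Finset.powersetCard j (Finset.univ : Finset (Fin n)),
            φ (s.piecewise (fun _ => x) (fun _ => z)) := by
  classical
  have h1 : (fun _ : Fin n => t • x + z)
      = (fun _ : Fin n => t • x) + (fun _ : Fin n => z) := rfl
  rw [h1, MultilinearMap.map_add_univ]
  have h2 : ∀ s : Finset (Fin n),
      φ (s.piecewise (fun _ => t • x) (fun _ => z))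
        = t ^ s.card • φ (s.piecewise (fun _ => x) (fun _ => z)) := by
    intro s
    have hps : s.piecewise (fun _ : Fin n => t • x) (fun _ => z)
        = s.piecewise (fun i => t • (s.piecewise (fun _ : Fin n => x) (fun _ => z)) i)
            (s.piecewise (fun _ : Fin n => x) (fun _ => z)) := by
      funext i
      by_cases hi : i ∈ s <;> simp [Finset.piecewise, hi]
    rw [hps, MultilinearMap.map_piecewise_smul]
    simp
  have h3 : ∑ s : Finset (Fin n), φ (s.piecewise (fun _ => t • x) (fun _ => z))
      = ∑ s ∈ (Finset.univ : Finset (Fin n)).powerset,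
          t ^ s.card • φ (s.piecewise (fun _ => x) (fun _ => z)) := by
    rw [Finset.powerset_univ]
    exact Finset.sum_congr rfl fun s _ => h2 s
  rw [h3, Finset.sum_powerset]
  simp only [Finset.card_univ, Fintype.card_fin]
  refine Finset.sum_congr rfl fun j _ => ?_
  rw [Finset.smul_sum]
  refine Finset.sum_congr rfl fun s hs => ?_
  rw [(Finset.mem_powersetCard.1 hs).2]


end Expand

section Plemmas

variable {𝓜 Y : Type*} [Ring 𝓜] [Algebra ℂ 𝓜] [AddCommGroup Y] [Module ℂ Y]
variable {n : ℕ} {φ : MultilinearMap ℂ (fun _ : Fin n => 𝓜) Y} {P : 𝓜 → Y}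

lemma isPolyFun_expand' (hP : ∀ a, P a = φ (fun _ => a)) (x z : 𝓜) :
    IsPolyFun (fun t => P (t • x + z)) := by
  refine ⟨n + 1, fun j => ∑ s ∈ Finset.powersetCard j (Finset.univ : Finset (Fin n)),
    φ (s.piecewise (fun _ => x) (fun _ => z)), fun t => ?_⟩
  dsimp only
  rw [hP]; exact expand_eval φ x z t

lemma P_smul (hn : 0 < n) (hP : ∀ a, P a = φ (fun _ => a)) (c : ℂ) (a : 𝓜) :
    P (c • a) = c ^ n • P a := by
  rw [hP, hP]
  have := φ.map_smul_univ (fun _ => c) (fun _ => a)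
  simpa using this

lemma P_zero (hn : 0 < n) (hP : ∀ a, P a = φ (fun _ => a)) : P 0 = 0 := by
  rw [hP]
  exact φ.map_coord_zero (⟨0, hn⟩ : Fin n) rfl

lemma P_sum_orth (hn : 0 < n) (hP : ∀ a, P a = φ (fun _ => a))
    (horth : ∀ a b : 𝓜, a * b = 0 → b * a = 0 → P (a + b) = P a + P b)
    {ι : Type*} (s : Finset ι) (x : ι → 𝓜)
    (hx : ∀ i ∈ s, ∀ j ∈ s, i ≠ j → x i * x j = 0) :
    P (∑ i ∈ s, x i) = ∑ i ∈ s, P (x i) := by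
  classical
  induction s using Finset.induction_on with
  | empty => simpa using P_zero hn hP
  | @insert a s' ha ih =>
    rw [Finset.sum_insert ha, Finset.sum_insert ha]
    have h1 : x a * (∑ i ∈ s', x i) = 0 := by
      rw [Finset.mul_sum]
      exact Finset.sum_eq_zero fun i hi => hx a (Finset.mem_insert_self _ _) i
        (Finset.mem_insert_of_mem hi) (fun h => ha (h ▸ hi))
    have h2 : (∑ i ∈ s', x i) * x a = 0 := by
      rw [Finset.sum_mul]
      exact Finset.sum_eq_zero fun i hi => hx i (Finset.mem_insert_of_mem hi) a
        (Finset.mem_insert_self _ _) (fun h => ha (h ▸ hi))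
    rw [horth _ _ h1 h2, ih (fun i hi j hj hij =>
      hx i (Finset.mem_insert_of_mem hi) j (Finset.mem_insert_of_mem hj) hij)]

/-- On an idempotent, the "diagonal" linearization recovers `n • P p`. -/
lemma psi_idem (hn : 0 < n) (hP : ∀ a, P a = φ (fun _ => a))
    (horth : ∀ a b : 𝓜, a * b = 0 → b * a = 0 → P (a + b) = P a + P b)
    (p : 𝓜) (hp : p * p = p) :
    ∑ i : Fin n, φ (Function.update (fun _ => (1 : 𝓜)) i p) = (n : ℂ) • P p := by
  classical
  set q : 𝓜 := 1 - p with hq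
  have hpq : p * q = 0 := by rw [hq, mul_sub, mul_one, hp, sub_self]
  have hqp : q * p = 0 := by rw [hq, sub_mul, one_mul, hp, sub_self]
  set d : ℕ → Y := fun j => ∑ s ∈ Finset.powersetCard j (Finset.univ : Finset (Fin n)),
    φ (s.piecewise (fun _ => p) (fun _ => (1 : 𝓜))) with hd
  have key : ∀ t : ℂ, ∑ j ∈ Finset.range (n + 1),
      t ^ j • (d j - (n.choose j : ℂ) • P p - (if j = 0 then P q else 0)) = 0 := by
    intro t
    have e1 : φ (fun _ => t • p + 1) = ∑ j ∈ Finset.range (n + 1), t ^ j • d j :=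
      expand_eval φ p 1 t
    have e2 : P (t • p + 1) = (t + 1) ^ n • P p + P q := by
      have : t • p + 1 = (t + 1) • p + q := by
        rw [hq, add_smul, one_smul]
        abel
      rw [this, horth _ _ (by rw [smul_mul_assoc, hpq, smul_zero])
        (by rw [mul_smul_comm, hqp, smul_zero]), P_smul hn hP]
    have e3 : ((t + 1) ^ n : ℂ) = ∑ j ∈ Finset.range (n + 1), (n.choose j : ℂ) * t ^ j := by
      rw [add_pow]
      exact Finset.sum_congr rfl fun j _ => by ring
    have e4 : ∑ j ∈ Finset.range (n + 1), t ^ j • (if j = 0 then P q else 0) = P q := by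
      rw [Finset.sum_eq_single 0]
      · simp
      · intro j _ hj; simp [hj]
      · simp
    have e5 : ∑ j ∈ Finset.range (n + 1), t ^ j • ((n.choose j : ℂ) • P p)
        = (t + 1) ^ n • P p := by
      rw [e3, Finset.sum_smul]
      refine Finset.sum_congr rfl fun j _ => ?_
      rw [smul_smul, mul_comm]
    calc ∑ j ∈ Finset.range (n + 1),
          t ^ j • (d j - (n.choose j : ℂ) • P p - (if j = 0 then P q else 0))
        = (∑ j ∈ Finset.range (n + 1), t ^ j • d j)
          - (∑ j ∈ Finset.range (n + 1), t ^ j • ((n.choose j : ℂ) • P p))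
          - (∑ j ∈ Finset.range (n + 1), t ^ j • (if j = 0 then P q else 0)) := by
          simp only [smul_sub, Finset.sum_sub_distrib]
      _ = 0 := by
          rw [e4, e5, ← e1, ← hP, e2]
          abel
  have hco := polyfun_coeff_eq_zero (Set.infinite_univ (α := ℂ))
    (fun t _ => key t) 1 (by omega)
  have hd1 : d 1 = (n : ℂ) • P p := by
    have h := hco
    rw [if_neg one_ne_zero, sub_zero, sub_eq_zero, Nat.choose_one_right] at h
    exact h
  rw [← hd1, hd]
  dsimp only
  rw [Finset.powersetCard_one, Finset.sum_map]
  refine Finset.sum_congr rfl fun i _ => ?_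
  congr 1
  rw [Function.Embedding.coeFn_mk, Finset.piecewise_singleton]

end Plemmas

section Spectral

open Polynomial

variable {A : Type*} [Ring A] [Algebra ℂ A]

lemma nodal_dvd_of_roots {ι : Type*} [DecidableEq ι] (s : Finset ι) (v : ι → ℂ)
    (hv : Set.InjOn v s) {f : ℂ[X]} (hf : ∀ i ∈ s, f.eval (v i) = 0) :
    (∏ i ∈ s, (X - C (v i))) ∣ f := by
  classical
  induction s using Finset.induction_on generalizing f with
  | empty => simpa using one_dvd f
  | @insert a s' ha ih =>
    obtain ⟨g, hg⟩ := (dvd_iff_isRoot (p := f) (a := v a)).2 (hf a (Finset.mem_insert_self _ _))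
    have hroots : ∀ i ∈ s', g.eval (v i) = 0 := by
      intro i hi
      have h0 := hf i (Finset.mem_insert_of_mem hi)
      rw [hg] at h0
      simp only [eval_mul, eval_sub, eval_X, eval_C] at h0
      have hia : i ≠ a := fun h => ha (h ▸ hi)
      have hne : v i - v a ≠ 0 := sub_ne_zero.2 fun h =>
        hia (hv (Finset.mem_insert_of_mem hi) (Finset.mem_insert_self a s') h)
      exact (mul_eq_zero.1 h0).resolve_left hne
    obtain ⟨g', hg'⟩ := ih (hv.mono (by intro x hx; exact Finset.mem_insert_of_mem hx)) hroots
    refine ⟨g', ?_⟩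
    rw [Finset.prod_insert ha, mul_assoc, ← hg', ← hg]

/-- A "diagonalizable" element of a complex algebra, with `k` distinct spectral values. -/
def GoodElt (k : ℕ) (m : A) : Prop :=
  ∃ lam : Fin k → ℂ, Function.Injective lam ∧
    Polynomial.aeval m (∏ i : Fin k, (X - C (lam i))) = 0

variable {k : ℕ}

lemma goodElt_smul {m : A} (hm : GoodElt k m) {c : ℂ} (hc : c ≠ 0) : GoodElt k (c • m) := by
  obtain ⟨lam, hinj, hann⟩ := hm
  refine ⟨fun i => c * lam i, fun i j hij => hinj (mul_left_cancel₀ hc hij), ?_⟩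
  have hpoly : (∏ i : Fin k, (X - C (c * lam i)) : ℂ[X])
      = C (c ^ k) * (∏ i : Fin k, (X - C (lam i))).comp (C c⁻¹ * X) := by
    rw [Polynomial.prod_comp]
    simp only [sub_comp, X_comp, C_comp]
    have hcc : (C c : ℂ[X]) ^ k = ∏ _i : Fin k, C c := by
      rw [Finset.prod_const, Finset.card_univ, Fintype.card_fin]
    rw [C_pow, hcc, ← Finset.prod_mul_distrib]
    refine Finset.prod_congr rfl fun i _ => ?_
    rw [mul_sub, ← mul_assoc, ← C_mul, mul_inv_cancel₀ hc, C_1, one_mul, ← C_mul]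
  rw [hpoly, map_mul, aeval_comp]
  have h1 : Polynomial.aeval (c • m) (C c⁻¹ * X) = m := by
    rw [map_mul, aeval_C, aeval_X, Algebra.smul_def c m, ← mul_assoc, ← map_mul,
      inv_mul_cancel₀ hc, map_one, one_mul]
  rw [h1, hann, mul_zero]

section Interp

variable {m : A} {lam : Fin k → ℂ}

/-- The spectral idempotents. -/
noncomputable def specProj (m : A) (lam : Fin k → ℂ) (i : Fin k) : A :=
  Polynomial.aeval m (Lagrange.basis Finset.univ lam i)

lemma aeval_eq_zero_of_roots (hinj : Function.Injective lam)
    (hann : Polynomial.aeval m (∏ i : Fin k, (X - C (lam i))) = 0) {f : ℂ[X]} (hf : ∀ i : Fin k, f.eval (lam i) = 0) :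
    Polynomial.aeval m f = 0 := by
  classical
  obtain ⟨g, hg⟩ := nodal_dvd_of_roots Finset.univ lam hinj.injOn
    (fun i _ => hf i)
  rw [hg, map_mul, hann, zero_mul]

lemma aeval_interp (hinj : Function.Injective lam)
    (hann : Polynomial.aeval m (∏ i : Fin k, (X - C (lam i))) = 0) (hk : 0 < k) (f : ℂ[X]) :
    Polynomial.aeval m f = ∑ i : Fin k, f.eval (lam i) • specProj m lam i := by
  classical
  haveI : Nonempty (Fin k) := ⟨⟨0, hk⟩⟩
  have hsub : Polynomial.aeval m
      (f - ∑ i : Fin k, C (f.eval (lam i)) * Lagrange.basis Finset.univ lam i) = 0 := by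
    refine aeval_eq_zero_of_roots hinj hann fun j => ?_
    simp only [eval_sub, eval_finset_sum, eval_mul, eval_C]
    rw [Finset.sum_eq_single j]
    · rw [Lagrange.eval_basis_self hinj.injOn (Finset.mem_univ j), mul_one, sub_self]
    · intro i _ hij
      rw [Lagrange.eval_basis_of_ne hij (Finset.mem_univ j), mul_zero]
    · simp
  rw [map_sub, sub_eq_zero] at hsub
  rw [hsub, map_sum]
  refine Finset.sum_congr rfl fun i _ => ?_
  rw [map_mul, aeval_C, specProj, Algebra.smul_def]

lemma specProj_sum (hinj : Function.Injective lam) (hk : 0 < k) : ∑ i : Fin k, specProj m lam i = 1 := by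
  classical
  haveI : Nonempty (Fin k) := ⟨⟨0, hk⟩⟩
  simp only [specProj]
  rw [← map_sum, Lagrange.sum_basis hinj.injOn Finset.univ_nonempty, map_one]

end Interp

end Spectral

section Interp2

open Polynomial

variable {A : Type*} [Ring A] [Algebra ℂ A] {k : ℕ} {m : A} {lam : Fin k → ℂ}

lemma specProj_mul (hinj : Function.Injective lam)
    (hann : Polynomial.aeval m (∏ i : Fin k, (X - C (lam i))) = 0) (hk : 0 < k) (i j : Fin k) :
    specProj m lam i * specProj m lam j
      = if i = j then specProj m lam i else 0 := by
  classical
  rw [specProj, specProj, ← map_mul, aeval_interp hinj hann hk]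
  by_cases hij : i = j
  · subst hij
    rw [if_pos rfl, Finset.sum_eq_single i]
    · rw [eval_mul, Lagrange.eval_basis_self hinj.injOn (Finset.mem_univ i), one_mul, one_smul]
      rfl
    · intro l _ hli
      rw [eval_mul, Lagrange.eval_basis_of_ne (Ne.symm hli) (Finset.mem_univ l), zero_mul,
        zero_smul]
    · simp
  · rw [if_neg hij]
    refine Finset.sum_eq_zero fun l _ => ?_
    by_cases hli : i = l
    · subst hli
      rw [eval_mul, Lagrange.eval_basis_of_ne (Ne.symm hij) (Finset.mem_univ i), mul_zero,
        zero_smul]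
    · rw [eval_mul, Lagrange.eval_basis_of_ne hli (Finset.mem_univ l), zero_mul, zero_smul]

lemma specProj_idem (hinj : Function.Injective lam)
    (hann : Polynomial.aeval m (∏ i : Fin k, (X - C (lam i))) = 0) (hk : 0 < k) (i : Fin k) :
    specProj m lam i * specProj m lam i = specProj m lam i := by
  rw [specProj_mul hinj hann hk, if_pos rfl]

lemma pow_eq_sum_specProj (hinj : Function.Injective lam)
    (hann : Polynomial.aeval m (∏ i : Fin k, (X - C (lam i))) = 0) (hk : 0 < k) (r : ℕ) :
    m ^ r = ∑ i : Fin k, (lam i) ^ r • specProj m lam i := by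
  have h := aeval_interp hinj hann hk (X ^ r : ℂ[X])
  rw [map_pow, aeval_X] at h
  rw [h]
  refine Finset.sum_congr rfl fun i _ => ?_
  rw [eval_pow, eval_X]

lemma eq_sum_specProj (hinj : Function.Injective lam)
    (hann : Polynomial.aeval m (∏ i : Fin k, (X - C (lam i))) = 0) (hk : 0 < k) :
    m = ∑ i : Fin k, lam i • specProj m lam i := by
  have h := pow_eq_sum_specProj hinj hann hk 1
  simpa using h

lemma goodElt_exists_pow {n : ℕ} (hn : 0 < n) (hk : 0 < k) {m : A} (hm : GoodElt k m) :
    ∃ b : A, b ^ n = m := by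
  classical
  obtain ⟨lam, hinj, hann⟩ := hm
  choose μ hμ using fun i : Fin k => IsAlgClosed.exists_pow_nat_eq (lam i) hn
  set w : ℂ[X] := ∑ i : Fin k, C (μ i) * Lagrange.basis Finset.univ lam i with hw
  have hevalw : ∀ l, w.eval (lam l) = μ l := by
    intro l
    rw [hw, eval_finset_sum, Finset.sum_eq_single l]
    · rw [eval_mul, eval_C, Lagrange.eval_basis_self hinj.injOn (Finset.mem_univ l), mul_one]
    · intro i _ hil
      rw [eval_mul, Lagrange.eval_basis_of_ne hil (Finset.mem_univ l), mul_zero]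
    · simp
  refine ⟨Polynomial.aeval m w, ?_⟩
  rw [← map_pow, aeval_interp hinj hann hk (w ^ n)]
  have h2 : ∀ l, (w ^ n).eval (lam l) = lam l := by
    intro l
    rw [eval_pow, hevalw, hμ]
  calc ∑ l : Fin k, (w ^ n).eval (lam l) • specProj m lam l
      = ∑ l : Fin k, lam l • specProj m lam l := by
        exact Finset.sum_congr rfl fun l _ => by rw [h2]
    _ = m := (eq_sum_specProj hinj hann hk).symm

end Interp2

section GoodKey

open Polynomial

variable {𝓜 Y : Type*} [Ring 𝓜] [Algebra ℂ 𝓜] [AddCommGroup Y] [Module ℂ Y]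
variable {n k : ℕ} {φ : MultilinearMap ℂ (fun _ : Fin n => 𝓜) Y} {P : 𝓜 → Y}

lemma goodElt_key (hk : 0 < k) (hn : 0 < n) (hP : ∀ a, P a = φ (fun _ => a))
    (horth : ∀ a b : 𝓜, a * b = 0 → b * a = 0 → P (a + b) = P a + P b)
    (Ψ : 𝓜 →ₗ[ℂ] Y)
    (hΨ : ∀ x, Ψ x = ∑ i : Fin n, φ (Function.update (fun _ => (1 : 𝓜)) i x))
    {m : 𝓜} (hm : GoodElt k m) :
    (n : ℂ) • P m = Ψ (m ^ n) := by
  classical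
  obtain ⟨lam, hinj, hann⟩ := hm
  set p := specProj m lam with hpdef
  have horthp : ∀ i j, i ≠ j → p i * p j = 0 := fun i j hij => by
    rw [hpdef, specProj_mul hinj hann hk, if_neg hij]
  have hidem : ∀ i, p i * p i = p i := fun i => specProj_idem hinj hann hk i
  have hPm : P m = ∑ i : Fin k, (lam i) ^ n • P (p i) := by
    conv_lhs => rw [eq_sum_specProj hinj hann hk]
    rw [P_sum_orth hn hP horth Finset.univ (fun i => lam i • p i)
      (fun i _ j _ hij => by
        rw [smul_mul_smul_comm, horthp i j hij, smul_zero])]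
    exact Finset.sum_congr rfl fun i _ => by rw [P_smul hn hP]
  have hpow := pow_eq_sum_specProj hinj hann hk n
  have hΨp : ∀ i, Ψ (p i) = (n : ℂ) • P (p i) := fun i => by
    rw [hΨ]
    exact psi_idem hn hP horth (p i) (hidem i)
  rw [hpow, map_sum]
  simp_rw [map_smul, ← hpdef, hΨp]
  rw [hPm, Finset.smul_sum]
  exact Finset.sum_congr rfl fun i _ => smul_comm _ _ _

end GoodKey

section Generic

open Polynomial Matrix

variable {k : ℕ}

lemma charpoly_diagonal' (v : Fin k → ℂ) :
    (Matrix.diagonal v).charpoly = ∏ i : Fin k, (X - C (v i)) := by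
  have h : charmatrix (Matrix.diagonal v)
      = Matrix.diagonal (fun i => (X : ℂ[X]) - C (v i)) := by
    ext i j
    by_cases hij : i = j
    · subst hij
      rw [charmatrix_apply_eq, Matrix.diagonal_apply_eq, Matrix.diagonal_apply_eq]
    · rw [charmatrix_apply_ne _ _ _ hij, Matrix.diagonal_apply_ne _ hij,
        Matrix.diagonal_apply_ne _ hij, map_zero, neg_zero]
  rw [Matrix.charpoly, h, Matrix.det_diagonal]

lemma natCast_fin_injective : Function.Injective (fun i : Fin k => (i : ℂ)) := by
  intro i j hij
  have : (i : ℕ) = (j : ℕ) := Nat.cast_injective hij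
  exact Fin.ext this

lemma goodElt_diagonal :
    GoodElt k (Matrix.diagonal (fun i : Fin k => (i : ℂ))) := by
  refine ⟨fun i => (i : ℂ), natCast_fin_injective, ?_⟩
  rw [← charpoly_diagonal']
  exact Matrix.aeval_self_charpoly _

lemma goodElt_of_sep {M : Matrix (Fin k) (Fin k) ℂ}
    (hsep : M.charpoly.Separable) : GoodElt k M := by
  classical
  have hmonic := M.charpoly_monic
  have hdeg : M.charpoly.natDegree = k := by
    rw [Matrix.charpoly_natDegree_eq_dim, Fintype.card_fin]
  have hsplits : M.charpoly.Splits := IsAlgClosed.splits _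
  have hcardroots : Multiset.card M.charpoly.roots = k := by
    have h1 := Polynomial.Splits.natDegree_eq_card_roots hsplits
    rw [← h1, hdeg]
  have hnodup : M.charpoly.roots.Nodup := Polynomial.nodup_roots hsep
  set F : Finset ℂ := M.charpoly.roots.toFinset with hF
  have hFval : F.val = M.charpoly.roots := by
    rw [hF, Multiset.toFinset_val, Multiset.dedup_eq_self.2 hnodup]
  have hFcard : F.card = k := by
    rw [Finset.card, hFval, hcardroots]
  let e : F ≃ Fin k := F.equivFinOfCardEq hFcard
  refine ⟨fun i => (e.symm i : ℂ), ?_, ?_⟩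
  · intro i j hij
    exact e.symm.injective (Subtype.ext hij)
  · have hprod : (∏ i : Fin k, (X - C ((e.symm i : F) : ℂ))) = M.charpoly := by
      rw [Polynomial.Splits.eq_prod_roots_of_monic hsplits hmonic]
      calc ∏ i : Fin k, (X - C ((e.symm i : F) : ℂ))
          = ∏ x : F, (X - C (x : ℂ)) := Fintype.prod_equiv e.symm _ _ (fun i => rfl)
        _ = ∏ x ∈ F, (X - C x) := Finset.prod_coe_sort F (fun x => X - C x)
        _ = (Multiset.map (fun a => X - C a) M.charpoly.roots).prod := by
            rw [Finset.prod, hFval]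
    rw [hprod]
    exact Matrix.aeval_self_charpoly _

lemma matrix_generic (A : Matrix (Fin k) (Fin k) ℂ) :
    {s : ℂ | ¬ GoodElt k (s • A + Matrix.diagonal (fun i : Fin k => (i : ℂ)))}.Finite := by
  classical
  set D : Matrix (Fin k) (Fin k) ℂ := Matrix.diagonal fun i : Fin k => (i : ℂ) with hD
  set N : Matrix (Fin k) (Fin k) (Polynomial ℂ) := (X : ℂ[X]) • A.map C + D.map C with hN
  set Q : (Polynomial ℂ)[X] := N.charpoly with hQdef
  have hQmonic : Q.Monic := N.charpoly_monic
  have hNmap : ∀ s : ℂ, N.map (evalRingHom s) = s • A + D := by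
    intro s
    ext i j
    simp only [hN, Matrix.map_apply, Matrix.add_apply, Matrix.smul_apply, smul_eq_mul,
      coe_evalRingHom, eval_add, eval_mul, eval_X, eval_C]
  have hQspec : ∀ s : ℂ, Q.map (evalRingHom s) = (s • A + D).charpoly := by
    intro s
    rw [hQdef, ← Matrix.charpoly_map, hNmap]
  set K := FractionRing (Polynomial ℂ)
  haveI : CharZero K :=
    charZero_of_injective_algebraMap (IsFractionRing.injective (Polynomial ℂ) K)
  have hinj : Function.Injective (algebraMap (Polynomial ℂ) K) :=
    IsFractionRing.injective _ _
  set QK := Q.map (algebraMap (Polynomial ℂ) K) with hQK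
  have hQKmonic : QK.Monic := hQmonic.map _
  -- squarefreeness over the fraction field, by specializing at 0
  have hsf : Squarefree QK := by
    intro x hx
    by_contra hunit
    have hx0 : x ≠ 0 := by
      rintro rfl
      rw [mul_zero, zero_dvd_iff] at hx
      exact hQKmonic.ne_zero hx
    set w := x * C x.leadingCoeff⁻¹ with hw
    have hwmonic : w.Monic := monic_mul_leadingCoeff_inv hx0
    have hwwdvd : w * w ∣ QK := by
      have hassoc : Associated (x * x) (w * w) := by
        apply Associated.mul_mul <;>
          exact (associated_mul_unit_right x _ (isUnit_C.2 (IsUnit.inv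
            (isUnit_iff_ne_zero.2 (leadingCoeff_ne_zero.2 hx0)))))
      exact hassoc.dvd_iff_dvd_left.1 hx
    have hwdvd : w ∣ QK := (dvd_mul_right w w).trans hwwdvd
    obtain ⟨w', hw'⟩ := IsIntegrallyClosed.eq_map_mul_C_of_dvd K hQmonic hwdvd
    rw [hwmonic.leadingCoeff, C_1, mul_one] at hw'
    have hw'monic : w'.Monic := by
      have := hwmonic
      rw [← hw'] at this
      exact Polynomial.monic_of_injective hinj this
    have hdvdR : w' * w' ∣ Q := by
      refine Polynomial.Monic.dvd_of_fraction_map_dvd_fraction_map (K := K) hQmonic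
        (hw'monic.mul hw'monic) ?_
      rw [Polynomial.map_mul, hw']
      exact hwwdvd
    -- specialize at 0
    have h0 : (w'.map (evalRingHom 0)) * (w'.map (evalRingHom 0)) ∣ D.charpoly := by
      have hdvd2 := map_dvd (Polynomial.mapRingHom (evalRingHom 0)) hdvdR
      simp only [Polynomial.coe_mapRingHom, Polynomial.map_mul] at hdvd2
      have h00 : (0 : ℂ) • A + D = D := by rw [zero_smul, zero_add]
      rwa [hQspec 0, h00] at hdvd2
    have hDsep : D.charpoly.Separable := by
      rw [hD, charpoly_diagonal']
      exact (Polynomial.separable_prod_X_sub_C_iff).2 natCast_fin_injective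
    have hDsf : Squarefree D.charpoly := hDsep.squarefree
    have hIsUnit := hDsf _ h0
    -- contradiction with degree
    have hdegx : 1 ≤ x.natDegree := by
      rcases Nat.eq_zero_or_pos x.natDegree with h | h
      · exfalso
        exact hunit (isUnit_iff_degree_eq_zero.2 (by
          rw [Polynomial.degree_eq_natDegree hx0, h]; rfl))
      · exact h
    have hdegw' : w'.natDegree = x.natDegree := by
      have h1 : w'.natDegree = w.natDegree := by
        rw [← hw']
        exact (Polynomial.natDegree_map_eq_of_injective hinj w').symm
      rw [h1, hw, Polynomial.natDegree_mul hx0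
        (C_ne_zero.2 (inv_ne_zero (leadingCoeff_ne_zero.2 hx0))), natDegree_C, add_zero]
    have hdeg0 : (w'.map (evalRingHom 0)).natDegree = w'.natDegree :=
      hw'monic.natDegree_map _
    have hcontr := Polynomial.natDegree_eq_zero_of_isUnit hIsUnit
    rw [hdeg0, hdegw'] at hcontr
    omega
  have hsep : QK.Separable := PerfectField.separable_iff_squarefree.mpr hsf
  obtain ⟨u, v, huv⟩ := hsep
  obtain ⟨bu, hbu⟩ := IsLocalization.integerNormalization_map_to_map
    (nonZeroDivisors (Polynomial ℂ)) u
  obtain ⟨bv, hbv⟩ := IsLocalization.integerNormalization_map_to_map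
    (nonZeroDivisors (Polynomial ℂ)) v
  set u' := IsLocalization.integerNormalization (nonZeroDivisors (Polynomial ℂ)) u with hu'
  set v' := IsLocalization.integerNormalization (nonZeroDivisors (Polynomial ℂ)) v with hv'
  set hpol : Polynomial ℂ := (bu : Polynomial ℂ) * (bv : Polynomial ℂ) with hh
  have hne : hpol ≠ 0 := mul_ne_zero (nonZeroDivisors.ne_zero bu.2) (nonZeroDivisors.ne_zero bv.2)
  have hbu' : u'.map (algebraMap (Polynomial ℂ) K) = C (algebraMap (Polynomial ℂ) K bu) * u := by
    rw [hbu, ← algebraMap_smul K ((bu : Polynomial ℂ)) u, Polynomial.smul_eq_C_mul]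
  have hbv' : v'.map (algebraMap (Polynomial ℂ) K) = C (algebraMap (Polynomial ℂ) K bv) * v := by
    rw [hbv, ← algebraMap_smul K ((bv : Polynomial ℂ)) v, Polynomial.smul_eq_C_mul]
  have hbezout : u' * C (bv : Polynomial ℂ) * Q + v' * C (bu : Polynomial ℂ) * Q.derivative
      = C hpol := by
    apply Polynomial.map_injective (algebraMap (Polynomial ℂ) K) hinj
    rw [Polynomial.map_add, Polynomial.map_mul, Polynomial.map_mul, Polynomial.map_mul,
      Polynomial.map_mul, map_C, map_C, map_C, hbu', hbv', ← Polynomial.derivative_map, hh,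
      _root_.map_mul, C_mul]
    have := huv
    rw [← hQK]
    linear_combination (C (algebraMap (Polynomial ℂ) K bu)
      * C (algebraMap (Polynomial ℂ) K bv)) * this
  refine Set.Finite.subset (Polynomial.finite_setOf_isRoot hne) ?_
  intro s hs
  simp only [Set.mem_setOf_eq] at hs ⊢
  by_contra hroot
  apply hs
  apply goodElt_of_sep
  rw [← hQspec s]
  have hcne : eval s hpol ≠ 0 := hroot
  have hspec := congrArg (Polynomial.map (evalRingHom s)) hbezout
  simp only [Polynomial.map_add, Polynomial.map_mul, map_C, coe_evalRingHom] at hspec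
  rw [← Polynomial.derivative_map] at hspec
  refine ⟨C ((eval s hpol)⁻¹) * (u'.map (evalRingHom s) * C (eval s (bv : Polynomial ℂ))),
    C ((eval s hpol)⁻¹) * (v'.map (evalRingHom s) * C (eval s (bu : Polynomial ℂ))), ?_⟩
  have hCC : (C ((eval s hpol)⁻¹) : ℂ[X]) * C (eval s hpol) = 1 := by
    rw [← C_mul, inv_mul_cancel₀ hcne, C_1]
  linear_combination (C ((eval s hpol)⁻¹) : ℂ[X]) * hspec + hCC

end Generic
/-- orthogonally additive `n`-homogeneous polynomials on a complex
Banach algebra isomorphic to a full matrix algebra admit a unique linear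
representation `P a = Φ (a ^ n)`. -/
theorem stmt1 {𝓜 Y : Type*} [NormedRing 𝓜] [NormedAlgebra ℂ 𝓜] [CompleteSpace 𝓜]
    [NormedAddCommGroup Y] [NormedSpace ℂ Y] [CompleteSpace Y]
    (k : ℕ) (hk : 0 < k) (iso : 𝓜 ≃ₐ[ℂ] Matrix (Fin k) (Fin k) ℂ)
    (n : ℕ) (hn : 0 < n)
    (φ : MultilinearMap ℂ (fun _ : Fin n => 𝓜) Y)
    (P : 𝓜 → Y) (hP : ∀ a, P a = φ (fun _ => a))
    (horth : ∀ a b : 𝓜, a * b = 0 → b * a = 0 → P (a + b) = P a + P b) :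
    ∃! Φ : 𝓜 →ₗ[ℂ] Y, ∀ a : 𝓜, P a = Φ (a ^ n) := by
  classical
  have hgood_transfer : ∀ M : Matrix (Fin k) (Fin k) ℂ,
      GoodElt k M → GoodElt k (iso.symm M) := by
    rintro M ⟨lam, hinj, hann⟩
    refine ⟨lam, hinj, ?_⟩
    rw [Polynomial.aeval_algHom_apply iso.symm M, hann, map_zero]
  set Ψ : 𝓜 →ₗ[ℂ] Y := ∑ i : Fin n, φ.toLinearMap (fun _ => (1 : 𝓜)) i with hΨdef
  have hΨ : ∀ x, Ψ x = ∑ i : Fin n, φ (Function.update (fun _ => (1 : 𝓜)) i x) := by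
    intro x
    rw [hΨdef, LinearMap.sum_apply]
    rfl
  set D : Matrix (Fin k) (Fin k) ℂ := Matrix.diagonal (fun i : Fin k => (i : ℂ)) with hDdef
  set d : 𝓜 := iso.symm D with hddef
  have hdgood : GoodElt k d := hgood_transfer D goodElt_diagonal
  have hspec : ∀ a : 𝓜, ∃ B : Set ℂ, B.Finite ∧ ∀ t ∉ B, GoodElt k (a + t • d) := by
    intro a
    have hfin := matrix_generic (k := k) (iso a)
    refine ⟨{0} ∪ (fun t : ℂ => t⁻¹) ''
      {s : ℂ | ¬ GoodElt k (s • iso a + D)}, (Set.finite_singleton 0).union (hfin.image _), ?_⟩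
    intro t ht
    simp only [Set.mem_union, Set.mem_singleton_iff, Set.mem_image, Set.mem_setOf_eq,
      not_or, not_exists, not_and] at ht
    obtain ⟨ht0, htB⟩ := ht
    have hs : GoodElt k (t⁻¹ • iso a + D) := by
      by_contra hbad
      exact htB t⁻¹ hbad (inv_inv t)
    have h1 : GoodElt k (t • (t⁻¹ • iso a + D)) := goodElt_smul hs ht0
    have h2 := hgood_transfer _ h1
    have h3 : iso.symm (t • (t⁻¹ • iso a + D)) = a + t • d := by
      rw [smul_add, smul_smul, mul_inv_cancel₀ ht0, one_smul, map_add, map_smul,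
        AlgEquiv.symm_apply_apply, hddef]
    rwa [h3] at h2
  have hmain : ∀ a : 𝓜, (n : ℂ) • P a = Ψ (a ^ n) := by
    intro a
    obtain ⟨B, hBfin, hB⟩ := hspec a
    have hgfun : IsPolyFun (fun t : ℂ => (n : ℂ) • P (a + t • d) - Ψ ((a + t • d) ^ n)) := by
      refine IsPolyFun.sub ?_ ?_
      · have h1 : IsPolyFun (fun t : ℂ => P (t • d + a)) := isPolyFun_expand' hP d a
        have h2 := h1.linear ((n : ℂ) • (LinearMap.id : Y →ₗ[ℂ] Y))
        have h3 : (fun t : ℂ => (n : ℂ) • P (a + t • d))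
            = fun t : ℂ => ((n : ℂ) • (LinearMap.id : Y →ₗ[ℂ] Y)) (P (t • d + a)) := by
          funext t
          rw [add_comm a (t • d), LinearMap.smul_apply, LinearMap.id_apply]
        rw [h3]
        exact h2
      · have h1 : IsPolyFun (fun t : ℂ => a + t • d) := by
          have := (isPolyFun_const (V := 𝓜) a).add (isPolyFun_monomial 1 d)
          simpa [pow_one] using this
        exact (h1.pow n).linear Ψ
    have hvanish : ∀ t ∈ Bᶜ,
        (n : ℂ) • P (a + t • d) - Ψ ((a + t • d) ^ n) = 0 := fun t ht =>
      sub_eq_zero.2 (goodElt_key hk hn hP horth Ψ hΨ (hB t ht))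
    have hall := hgfun.eq_zero_of_infinite (hBfin.infinite_compl) hvanish
    have h0 := hall 0
    rw [zero_smul, add_zero, sub_eq_zero] at h0
    exact h0
  have hncast : ((n : ℂ)) ≠ 0 := Nat.cast_ne_zero.2 hn.ne'
  have hrep : ∀ a : 𝓜, P a = ((n : ℂ)⁻¹ • Ψ) (a ^ n) := by
    intro a
    rw [LinearMap.smul_apply, ← hmain a, smul_smul, inv_mul_cancel₀ hncast, one_smul]
  refine ⟨(n : ℂ)⁻¹ • Ψ, hrep, ?_⟩
  intro Φ' hΦ'
  have hagree : ∀ m : 𝓜, GoodElt k m → Φ' m = ((n : ℂ)⁻¹ • Ψ) m := by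
    intro m hm
    obtain ⟨b, hb⟩ := goodElt_exists_pow hn hk hm
    rw [← hb, ← hΦ' b, hrep b]
  apply LinearMap.ext
  intro a
  obtain ⟨B, hBfin, hB⟩ := hspec a
  obtain ⟨t, ht⟩ := (hBfin.union (Set.finite_singleton 0)).infinite_compl.nonempty
  simp only [Set.mem_compl_iff, Set.mem_union, Set.mem_singleton_iff, not_or] at ht
  obtain ⟨htB, ht0⟩ := ht
  have h1 : Φ' (a + t • d) = ((n : ℂ)⁻¹ • Ψ) (a + t • d) := hagree _ (hB t htB)
  have h2 : Φ' d = ((n : ℂ)⁻¹ • Ψ) d := hagree d hdgood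
  calc Φ' a = Φ' (a + t • d) - t • Φ' d := by rw [map_add, map_smul]; abel
    _ = ((n : ℂ)⁻¹ • Ψ) (a + t • d) - t • (((n : ℂ)⁻¹ • Ψ) d) := by rw [h1, h2]
    _ = ((n : ℂ)⁻¹ • Ψ) a := by rw [map_add, map_smul]; abel
end

section
/- Let 𝓜 be a complex algebra with identity e isomorphic to M_k(ℂ), let Y be a Banach space, let P : 𝓜 → Y be an orthogonally additive n-homogeneous polynomial with associated symmetric n-linear map φ, and let Φ : 𝓜 → Y be a linear map with P(a) = Φ(aⁿ) for all a. Then Φ(a) = φ(a, e, ..., e) for every a ∈ 𝓜. -/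
lemma coeff_extract {Y : Type*} [NormedAddCommGroup Y] [NormedSpace ℂ Y]
    (N : ℕ) (y : ℕ → Y) (h : ∀ t : ℂ, ∑ j ∈ Finset.range N, t ^ j • y j = 0) :
    ∀ j < N, y j = 0 := by
  intro j hj
  apply NormedSpace.eq_zero_of_forall_dual_eq_zero ℂ
  intro f
  have hp0 : (∑ i ∈ Finset.range N, Polynomial.C (f (y i)) * Polynomial.X ^ i : Polynomial ℂ) = 0 := by
    apply Polynomial.funext
    intro t
    have h2 := congrArg f (h t)
    simp only [map_sum, map_smul, smul_eq_mul, map_zero] at h2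
    rw [Polynomial.eval_zero, Polynomial.eval_finset_sum]
    simp only [Polynomial.eval_mul, Polynomial.eval_C, Polynomial.eval_pow, Polynomial.eval_X]
    rw [← h2]
    exact Finset.sum_congr rfl fun i _ => mul_comm _ _
  have h3 := congrArg (fun q => Polynomial.coeff q j) hp0
  simpa [Polynomial.finset_sum_coeff, Polynomial.coeff_C_mul,
    Polynomial.coeff_X_pow, Finset.sum_ite_eq', hj] using h3

/-- if `P a = Φ (a ^ n)` represents an orthogonally additive
`n`-homogeneous polynomial on a unital complex algebra isomorphic to `M_k(ℂ)`,
then `Φ a = φ (a, e, ..., e)` where `φ` is the associated symmetric `n`-linear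
map and `e = 1` is the identity. -/
theorem stmt2 {𝓜 Y : Type*} [Ring 𝓜] [Algebra ℂ 𝓜]
    [NormedAddCommGroup Y] [NormedSpace ℂ Y] [CompleteSpace Y]
    (k : ℕ) (hk : 0 < k) (iso : 𝓜 ≃ₐ[ℂ] Matrix (Fin k) (Fin k) ℂ)
    (n : ℕ) (hn : 0 < n)
    (φ : MultilinearMap ℂ (fun _ : Fin n => 𝓜) Y)
    (hsym : ∀ (σ : Equiv.Perm (Fin n)) (v : Fin n → 𝓜), φ (fun i => v (σ i)) = φ v)
    (P : 𝓜 → Y) (hP : ∀ a, P a = φ (fun _ => a))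
    (horth : ∀ a b : 𝓜, a * b = 0 → b * a = 0 → P (a + b) = P a + P b)
    (Φ : 𝓜 →ₗ[ℂ] Y) (hΦ : ∀ a : 𝓜, P a = Φ (a ^ n)) :
    ∀ a : 𝓜, Φ a = φ (fun i => if i = ⟨0, hn⟩ then a else 1) := by
  classical
  intro a
  set y : ℕ → Y := fun j =>
    (∑ s ∈ Finset.univ.filter (fun s : Finset (Fin n) => s.card = j),
        φ (s.piecewise (fun _ => a) (fun _ => 1)))
      - (n.choose j) • Φ (a ^ j) with hy
  have key : ∀ t : ℂ, ∑ j ∈ Finset.range (n + 1), t ^ j • y j = 0 := by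
    intro t
    have lhs : φ (fun _ => 1 + t • a)
        = ∑ j ∈ Finset.range (n + 1), t ^ j •
            ∑ s ∈ Finset.univ.filter (fun s : Finset (Fin n) => s.card = j),
              φ (s.piecewise (fun _ => a) (fun _ => 1)) := by
      have h1 : (fun _ : Fin n => 1 + t • a)
          = (fun _ : Fin n => t • a) + (fun _ => 1) := by
        funext i; simp [add_comm]
      rw [h1, φ.map_add_univ]
      have h2 : ∀ s : Finset (Fin n),
          φ (s.piecewise (fun _ => t • a) (fun _ => 1))
            = t ^ s.card • φ (s.piecewise (fun _ => a) (fun _ => 1)) := by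
        intro s
        have h3 := φ.map_piecewise_smul (fun _ => t)
          (s.piecewise (fun _ => a) (fun _ => 1)) s
        rw [Finset.prod_const] at h3
        rw [← h3]
        congr 1
        funext i
        by_cases hi : i ∈ s <;> simp [Finset.piecewise, hi]
      have h4 : ∀ s : Finset (Fin n), s ∈ Finset.univ →
          s.card ∈ Finset.range (n + 1) := by
        intro s _
        simp [Nat.lt_succ_iff]
        simpa using Finset.card_le_univ s
      rw [← Finset.sum_fiberwise_of_maps_to h4
        (fun s => φ (s.piecewise (fun _ => t • a) (fun _ => 1)))]
      apply Finset.sum_congr rfl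
      intro j _
      rw [Finset.smul_sum]
      apply Finset.sum_congr rfl
      intro s hs
      rw [h2 s]
      simp only [Finset.mem_filter] at hs
      rw [hs.2]
    have rhs : Φ ((1 + t • a) ^ n)
        = ∑ j ∈ Finset.range (n + 1), t ^ j • ((n.choose j) • Φ (a ^ j)) := by
      have hc : Commute (t • a) (1 : 𝓜) := Commute.one_right _
      rw [add_comm (1 : 𝓜), hc.add_pow, map_sum]
      apply Finset.sum_congr rfl
      intro j _
      have h5 : (t • a) ^ j * 1 ^ (n - j) * (n.choose j : 𝓜)
          = t ^ j • ((n.choose j) • a ^ j) := by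
        rw [one_pow, mul_one, smul_pow, smul_mul_assoc]
        congr 1
        rw [nsmul_eq_mul, (Nat.cast_commute (n.choose j) (a ^ j)).eq]
      rw [h5, map_smul, map_nsmul]
    have h6 : φ (fun _ => 1 + t • a) = Φ ((1 + t • a) ^ n) := by
      rw [← hP, hΦ]
    rw [lhs, rhs] at h6
    simp only [hy, smul_sub]
    rw [Finset.sum_sub_distrib, h6, sub_self]
  have h7 := coeff_extract (n + 1) y key 1 (by omega)
  simp only [hy, sub_eq_zero] at h7
  have himg : Finset.univ.filter (fun s : Finset (Fin n) => s.card = 1)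
      = Finset.univ.image (fun i : Fin n => ({i} : Finset (Fin n))) := by
    ext s
    simp [Finset.card_eq_one, eq_comm]
  have hsing : ∀ i : Fin n,
      φ (({i} : Finset (Fin n)).piecewise (fun _ => a) (fun _ => 1))
        = φ (fun i => if i = ⟨0, hn⟩ then a else 1) := by
    intro i
    have hv := hsym (Equiv.swap i ⟨0, hn⟩) (fun j => if j = i then a else 1)
    have h1 : ({i} : Finset (Fin n)).piecewise (fun _ => a) (fun _ => 1)
        = fun j => if j = i then a else 1 := by
      funext j; simp [Finset.piecewise]
    rw [h1, ← hv]
    congr 1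
    funext j
    by_cases hj : j = ⟨0, hn⟩
    · simp [hj, Equiv.swap_apply_right]
    · by_cases hji : j = i
      · have hne : i ≠ (⟨0, hn⟩ : Fin n) := fun h => hj (hji.trans h)
        simp [hji, Equiv.swap_apply_left, hne, Ne.symm hne]
      · simp [Equiv.swap_apply_of_ne_of_ne hji hj, hji, hj]
  rw [himg, Finset.sum_image (fun x _ y _ h => Finset.singleton_injective h)] at h7
  simp only [hsing, Finset.sum_const, Finset.card_univ, Fintype.card_fin,
    Nat.choose_one_right, pow_one] at h7
  have h8 : (n : ℂ) • φ (fun i => if i = ⟨0, hn⟩ then a else 1)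
      = (n : ℂ) • Φ a := by
    rw [Nat.cast_smul_eq_nsmul, Nat.cast_smul_eq_nsmul, h7]
  have h9 := smul_right_injective Y (by exact_mod_cast hn.ne' : (n : ℂ) ≠ 0) h8
  rw [h9]
end

section
/- Let A be a (possibly noncommutative) ring, let a₁,...,aₙ, c ∈ A, and define πₙ(x₁,...,xₙ) = Σ_{σ∈Sₙ} x_{σ(1)}···x_{σ(n)}. Then Σ_{σ∈Sₙ} πₙ(a_{σ(1)},...,a_{σ(n−1)}, a_{σ(n)}c) = (n−1)! Σ_{σ∈Sₙ} [a_{σ(1)}···a_{σ(n)}c + a_{σ(1)}···a_{σ(n−1)}c a_{σ(n)} + ··· + a_{σ(1)}c a_{σ(2)}···a_{σ(n)}], where the bracket is the sum over all n positions at which c can be inserted after a_{σ(1)}. -/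
/-- `πₙ(x₁,…,xₙ) = Σ_{σ ∈ Sₙ} x_{σ(1)} ⋯ x_{σ(n)}`, the full symmetrization of
the product in a possibly noncommutative ring. -/
def symProd {A : Type*} [Ring A] {n : ℕ} (v : Fin n → A) : A :=
  ∑ σ : Equiv.Perm (Fin n), (List.ofFn fun i => v (σ i)).prod

open Equiv Finset

lemma list_key {A : Type*} [Ring A] {n : ℕ} (c : A) (w : Fin n → A) (k : Fin n) :
    (List.ofFn (Function.update w k (w k * c))).prod =
    ((List.ofFn w).take (k + 1) ++ c :: (List.ofFn w).drop (k + 1)).prod := by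
  induction n with
  | zero => exact k.elim0
  | succ n ih =>
    induction k using Fin.cases with
    | zero =>
      have h2 : (fun i : Fin n => Function.update w 0 (w 0 * c) i.succ) = fun i => w i.succ := by
        funext i; simp [Function.update_apply, Fin.succ_ne_zero]
      simp [List.ofFn_succ, h2, mul_assoc]
    | succ j =>
      rw [List.ofFn_succ, List.ofFn_succ (f := w)]
      have h1 : Function.update w j.succ (w j.succ * c) 0 = w 0 := by
        simp [Function.update_apply, (Fin.succ_ne_zero j).symm]
      have h2 : (fun i : Fin n => Function.update w j.succ (w j.succ * c) i.succ) =
          Function.update (fun i : Fin n => w i.succ) j (w j.succ * c) := by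
        funext i
        rcases eq_or_ne i j with rfl | h
        · simp
        · simp [Function.update_apply, h, (Fin.succ_injective n).ne h]
      rw [h1, h2]
      have := ih (fun i => w i.succ) j
      simp only [List.prod_cons]
      rw [this]
      simp [Fin.val_succ, List.take_succ_cons, List.drop_succ_cons, List.prod_append, mul_assoc]

/-- `Σ_σ πₙ(a_{σ(1)},…,a_{σ(n-1)},a_{σ(n)}c) = (n-1)! Σ_σ Σ`
over the `n` insertion positions of `c` after the first factor (here `n = m+1`). -/
theorem stmt11 {A : Type*} [Ring A] (m : ℕ) (a : Fin (m + 1) → A) (c : A) :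
    ∑ σ : Equiv.Perm (Fin (m + 1)),
      symProd (Fin.snoc (fun i : Fin m => a (σ i.castSucc)) (a (σ (Fin.last m)) * c)) =
    m.factorial •
      ∑ σ : Equiv.Perm (Fin (m + 1)), ∑ l ∈ Finset.Icc 1 (m + 1),
        (((List.ofFn fun i => a (σ i)).take l) ++
          c :: ((List.ofFn fun i => a (σ i)).drop l)).prod := by

  set f : Perm (Fin (m + 1)) → Fin (m + 1) → A := fun ρ k =>
    ((List.ofFn fun i => a (ρ i)).take (k + 1) ++
      c :: ((List.ofFn fun i => a (ρ i)).drop (k + 1))).prod with hf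
  have stepA : ∀ σ τ : Perm (Fin (m + 1)),
      (List.ofFn fun i =>
        (Fin.snoc (fun i : Fin m => a (σ i.castSucc)) (a (σ (Fin.last m)) * c) : Fin (m+1) → A)
          (τ i)).prod =
      f (σ * τ) (τ⁻¹ (Fin.last m)) := by
    intro σ τ
    have hw : (fun i => (Fin.snoc (fun i : Fin m => a (σ i.castSucc))
        (a (σ (Fin.last m)) * c) : Fin (m+1) → A) (τ i)) =
        Function.update (fun i => a ((σ * τ) i)) (τ⁻¹ (Fin.last m))
          ((fun i => a ((σ * τ) i)) (τ⁻¹ (Fin.last m)) * c) := by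
      funext i
      rcases eq_or_ne (τ i) (Fin.last m) with h | h
      · have hi : i = τ⁻¹ (Fin.last m) := by
          rw [← h]; simp
        rw [h, hi]
        simp [Fin.snoc_last, Perm.mul_apply]
      · have hi : i ≠ τ⁻¹ (Fin.last m) := fun hi => h (by rw [hi]; simp)
        obtain ⟨p, hp⟩ := Fin.exists_castSucc_eq.mpr h
        rw [← hp, Fin.snoc_castSucc, Function.update_apply, if_neg hi]
        simp [Perm.mul_apply, hp]
    rw [hw, list_key]
  unfold symProd
  calc
    ∑ σ : Perm (Fin (m + 1)), ∑ τ : Perm (Fin (m + 1)),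
        (List.ofFn fun i =>
          (Fin.snoc (fun i : Fin m => a (σ i.castSucc)) (a (σ (Fin.last m)) * c) : Fin (m+1) → A)
            (τ i)).prod
      = ∑ σ : Perm (Fin (m + 1)), ∑ τ : Perm (Fin (m + 1)), f (σ * τ) (τ⁻¹ (Fin.last m)) := by
        exact Finset.sum_congr rfl fun σ _ => Finset.sum_congr rfl fun τ _ => stepA σ τ
    _ = ∑ τ : Perm (Fin (m + 1)), ∑ σ : Perm (Fin (m + 1)), f (σ * τ) (τ⁻¹ (Fin.last m)) :=
        Finset.sum_comm
    _ = ∑ τ : Perm (Fin (m + 1)), ∑ ρ : Perm (Fin (m + 1)), f ρ (τ⁻¹ (Fin.last m)) := by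
        refine Finset.sum_congr rfl fun τ _ => ?_
        exact Equiv.sum_comp (Equiv.mulRight τ) (fun ρ => f ρ (τ⁻¹ (Fin.last m)))
    _ = ∑ ρ : Perm (Fin (m + 1)), ∑ τ : Perm (Fin (m + 1)), f ρ (τ⁻¹ (Fin.last m)) :=
        Finset.sum_comm
    _ = ∑ ρ : Perm (Fin (m + 1)), ∑ τ : Perm (Fin (m + 1)), f ρ (τ (Fin.last m)) := by
        refine Finset.sum_congr rfl fun ρ _ => ?_
        exact Equiv.sum_comp (Equiv.inv (Perm (Fin (m+1)))) (fun τ => f ρ (τ (Fin.last m)))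
    _ = ∑ ρ : Perm (Fin (m + 1)), ∑ τ : Perm (Fin (m + 1)), f ρ (τ 0) := by
        refine Finset.sum_congr rfl fun ρ _ => ?_
        rw [← Equiv.sum_comp (Equiv.mulRight (Equiv.swap 0 (Fin.last m)))
          (fun τ => f ρ (τ (Fin.last m)))]
        refine Finset.sum_congr rfl fun τ _ => ?_
        show f ρ ((τ * Equiv.swap 0 (Fin.last m)) (Fin.last m)) = f ρ (τ 0)
        rw [Perm.mul_apply, Equiv.swap_apply_right]
    _ = ∑ ρ : Perm (Fin (m + 1)), m.factorial • ∑ k : Fin (m + 1), f ρ k := by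
        refine Finset.sum_congr rfl fun ρ _ => ?_
        rw [← Equiv.sum_comp (Equiv.Perm.decomposeFin (n := m)).symm (fun τ => f ρ (τ 0))]
        rw [show (fun pr : Fin (m+1) × Perm (Fin m) => f ρ ((Equiv.Perm.decomposeFin.symm pr) 0))
          = fun pr => f ρ pr.1 by funext pr; obtain ⟨p, e⟩ := pr; rw [Equiv.Perm.decomposeFin_symm_apply_zero]]
        rw [Fintype.sum_prod_type, Finset.smul_sum]
        refine Finset.sum_congr rfl fun k _ => ?_
        simp [Finset.sum_const, Fintype.card_perm, Fintype.card_fin]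
    _ = m.factorial • ∑ ρ : Perm (Fin (m + 1)), ∑ k : Fin (m + 1), f ρ k := by
        rw [Finset.smul_sum]
    _ = m.factorial • ∑ σ : Perm (Fin (m + 1)), ∑ l ∈ Finset.Icc 1 (m + 1),
          (((List.ofFn fun i => a (σ i)).take l) ++
            c :: ((List.ofFn fun i => a (σ i)).drop l)).prod := by
        congr 1
        refine Finset.sum_congr rfl fun ρ _ => ?_
        rw [Fin.sum_univ_eq_sum_range (fun k => ((List.ofFn fun i => a (ρ i)).take (k + 1) ++
          c :: ((List.ofFn fun i => a (ρ i)).drop (k + 1))).prod)]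
        refine Finset.sum_nbij' (fun k => k + 1) (fun l => l - 1) ?_ ?_ ?_ ?_ ?_
        · intro k hk; simp at hk ⊢; omega
        · intro l hl; simp at hl ⊢; omega
        · intro k hk; simp
        · intro l hl; simp only [Finset.mem_Icc] at hl
          show l - 1 + 1 = l; omega
        · intro k hk; rfl
end

section
/- Let A be a ring, a₁,...,aₙ, c ∈ A, and πₙ(x₁,...,xₙ) = Σ_{σ∈Sₙ} x_{σ(1)}···x_{σ(n)}. Then Σ_{σ∈Sₙ} πₙ(a_{σ(1)},...,a_{σ(n−1)}, c·a_{σ(n)}) = (n−1)! Σ_{σ∈Sₙ} [a_{σ(1)}···a_{σ(n−1)} c a_{σ(n)} + a_{σ(1)}···c a_{σ(n−1)} a_{σ(n)} + ··· + c a_{σ(1)}···a_{σ(n)}], where the bracket sums over all n positions at which c can be inserted before a_{σ(n)}. -/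
lemma ofFn_update_eq_set {A : Type*} {n : ℕ} (u : Fin n → A) (l : Fin n) (x : A) :
    List.ofFn (Function.update u l x) = (List.ofFn u).set l x := by
  apply List.ext_getElem
  · simp
  · intro i h1 h2
    simp only [List.getElem_ofFn, List.getElem_set]
    by_cases hi : (l : ℕ) = i
    · simp [Function.update, ← hi, Fin.ext_iff]
    · rw [if_neg hi]
      rw [Function.update_of_ne (by simp only [ne_eq, Fin.ext_iff]; omega)]

lemma prod_update {A : Type*} [Ring A] {n : ℕ} (u : Fin n → A) (l : Fin n) (c : A) :
    (List.ofFn (Function.update u l (c * u l))).prod =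
    ((List.ofFn u).take l ++ c :: (List.ofFn u).drop l).prod := by
  have hl : (l : ℕ) < (List.ofFn u).length := by simp [l.isLt]
  rw [ofFn_update_eq_set, List.set_eq_take_cons_drop _ hl,
    List.drop_eq_getElem_cons hl]
  simp [List.prod_append, mul_assoc]

lemma key {A : Type*} [Ring A] {m : ℕ} (a : Fin (m + 1) → A) (c : A)
    (σ τ : Equiv.Perm (Fin (m + 1))) :
    (List.ofFn fun j =>
        (Fin.snoc (fun i : Fin m => a (σ i.castSucc)) (c * a (σ (Fin.last m))) :
          Fin (m + 1) → A) (τ j)).prod =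
      ((List.ofFn fun j => a ((σ * τ) j)).take ((τ⁻¹ (Fin.last m) : Fin (m + 1)) : ℕ) ++
        c :: (List.ofFn fun j => a ((σ * τ) j)).drop
          ((τ⁻¹ (Fin.last m) : Fin (m + 1)) : ℕ)).prod := by
  have hfun : (fun j =>
      (Fin.snoc (fun i : Fin m => a (σ i.castSucc)) (c * a (σ (Fin.last m))) :
        Fin (m + 1) → A) (τ j)) =
      Function.update (fun j => a ((σ * τ) j)) (τ⁻¹ (Fin.last m))
        (c * a ((σ * τ) (τ⁻¹ (Fin.last m)))) := by
    funext j
    by_cases hj : j = τ⁻¹ (Fin.last m)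
    · subst hj
      simp [Fin.snoc_last]
    · have hτj : τ j ≠ Fin.last m := by
        intro h
        exact hj (by rw [← h]; simp)
      obtain ⟨i, hi⟩ := Fin.exists_castSucc_eq.mpr hτj
      rw [Function.update_of_ne hj, ← hi, Fin.snoc_castSucc]
      simp [hi]
  rw [hfun, prod_update]

/-- `Σ_σ πₙ(a_{σ(1)},…,a_{σ(n-1)},c·a_{σ(n)}) = (n-1)! Σ_σ Σ`
over the `n` insertion positions of `c` before the last factor (here `n = m+1`). -/
theorem stmt12 {A : Type*} [Ring A] (m : ℕ) (a : Fin (m + 1) → A) (c : A) :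
    ∑ σ : Equiv.Perm (Fin (m + 1)),
      symProd (Fin.snoc (fun i : Fin m => a (σ i.castSucc)) (c * a (σ (Fin.last m)))) =
    m.factorial •
      ∑ σ : Equiv.Perm (Fin (m + 1)), ∑ l ∈ Finset.range (m + 1),
        (((List.ofFn fun i => a (σ i)).take l) ++
          c :: ((List.ofFn fun i => a (σ i)).drop l)).prod := by
  classical
  -- the word with `c` inserted at position `l` in `a ∘ ρ`
  set W : Equiv.Perm (Fin (m + 1)) → ℕ → A := fun ρ l =>
    (((List.ofFn fun i => a (ρ i)).take l) ++
      c :: ((List.ofFn fun i => a (ρ i)).drop l)).prod with hW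
  have step1 : ∑ σ : Equiv.Perm (Fin (m + 1)),
      symProd (Fin.snoc (fun i : Fin m => a (σ i.castSucc)) (c * a (σ (Fin.last m)))) =
      ∑ σ : Equiv.Perm (Fin (m + 1)), ∑ τ : Equiv.Perm (Fin (m + 1)),
        W (σ * τ) ((τ⁻¹ (Fin.last m) : Fin (m + 1)) : ℕ) := by
    unfold symProd
    refine Finset.sum_congr rfl fun σ _ => Finset.sum_congr rfl fun τ _ => ?_
    exact key a c σ τ
  rw [step1, Finset.sum_comm]
  have step2 : ∀ τ : Equiv.Perm (Fin (m + 1)),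
      (∑ σ : Equiv.Perm (Fin (m + 1)), W (σ * τ) ((τ⁻¹ (Fin.last m) : Fin (m + 1)) : ℕ)) =
      ∑ ρ : Equiv.Perm (Fin (m + 1)), W ρ ((τ⁻¹ (Fin.last m) : Fin (m + 1)) : ℕ) := by
    intro τ
    exact Equiv.sum_comp (Equiv.mulRight τ) fun ρ => W ρ _
  simp only [step2]
  rw [Finset.sum_comm]
  have step3 : ∀ ρ : Equiv.Perm (Fin (m + 1)),
      (∑ τ : Equiv.Perm (Fin (m + 1)), W ρ ((τ⁻¹ (Fin.last m) : Fin (m + 1)) : ℕ)) =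
      m.factorial • ∑ l ∈ Finset.range (m + 1), W ρ l := by
    intro ρ
    have h1 : (∑ τ : Equiv.Perm (Fin (m + 1)), W ρ ((τ⁻¹ (Fin.last m) : Fin (m + 1)) : ℕ)) =
        ∑ τ : Equiv.Perm (Fin (m + 1)), W ρ ((τ (Fin.last m) : Fin (m + 1)) : ℕ) :=
      Equiv.sum_comp (Equiv.inv (Equiv.Perm (Fin (m + 1))))
        (fun τ => W ρ ((τ (Fin.last m) : Fin (m + 1)) : ℕ))
    rw [h1]
    have h2 : (∑ τ : Equiv.Perm (Fin (m + 1)), W ρ ((τ (Fin.last m) : Fin (m + 1)) : ℕ)) =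
        ∑ τ : Equiv.Perm (Fin (m + 1)), W ρ ((τ 0 : Fin (m + 1)) : ℕ) := by
      have := Equiv.sum_comp (Equiv.mulRight (Equiv.swap (0 : Fin (m + 1)) (Fin.last m)))
        (fun τ => W ρ ((τ (Fin.last m) : Fin (m + 1)) : ℕ))
      rw [← this]
      refine Finset.sum_congr rfl fun τ _ => ?_
      simp [Equiv.Perm.mul_apply, Equiv.swap_apply_right]
    rw [h2]
    have h3 : (∑ τ : Equiv.Perm (Fin (m + 1)), W ρ ((τ 0 : Fin (m + 1)) : ℕ)) =
        ∑ x : Fin (m + 1) × Equiv.Perm (Fin m),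
          W ρ ((Equiv.Perm.decomposeFin.symm x 0 : Fin (m + 1)) : ℕ) :=
      (Equiv.sum_comp Equiv.Perm.decomposeFin.symm
        (fun τ => W ρ ((τ 0 : Fin (m + 1)) : ℕ))).symm
    rw [h3]
    have h4 : ∀ x : Fin (m + 1) × Equiv.Perm (Fin m),
        (Equiv.Perm.decomposeFin.symm x 0 : Fin (m + 1)) = x.1 := fun x =>
      Equiv.Perm.decomposeFin_symm_apply_zero x.1 x.2
    simp only [h4]
    rw [Fintype.sum_prod_type]
    simp only [Finset.sum_const, Finset.card_univ, Fintype.card_perm, Fintype.card_fin]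
    rw [← Finset.smul_sum]
    congr 1
    exact Fin.sum_univ_eq_sum_range (fun l => W ρ l) (m + 1)
  simp only [step3]
  rw [← Finset.smul_sum]
end

section
/- Let A be a ring, n ≥ 2, a₁,...,aₙ, c ∈ A, and πₙ(x₁,...,xₙ) = Σ_{σ∈Sₙ} x_{σ(1)}···x_{σ(n)}. Then Σ_{σ∈Sₙ} πₙ(a_{σ(1)},...,a_{σ(n−2)}, a_{σ(n−1)}a_{σ(n)}, c) = (n−1)! Σ_{σ∈Sₙ} [a_{σ(1)}···a_{σ(n)} c + c a_{σ(1)}···a_{σ(n)}] + (n−2)(n−2)! Σ_{σ∈Sₙ} [a_{σ(1)}···a_{σ(n−1)} c a_{σ(n)} + ··· + a_{σ(1)} c a_{σ(2)}···a_{σ(n)}], where the last bracket sums over the n−1 interior insertion positions of c strictly between consecutive factors. -/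
open List Finset

section Aux

/-- The permutation of `Fin (n+1)` that puts `last n` at position `l` and the
rest (reordered by `τ`, viewed in `Fin (n+1)` via `castSucc`) at the remaining
positions in order. -/
def DPerm {n : ℕ} (l : Fin (n + 1)) (τ : Equiv.Perm (Fin n)) : Equiv.Perm (Fin (n + 1)) :=
  (finSuccEquiv' l).trans ((Equiv.optionCongr τ).trans (finSuccEquiv' (Fin.last n)).symm)

@[simp] lemma DPerm_self {n : ℕ} (l : Fin (n + 1)) (τ : Equiv.Perm (Fin n)) :
    DPerm l τ l = Fin.last n := by
  simp [DPerm]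

@[simp] lemma DPerm_succAbove {n : ℕ} (l : Fin (n + 1)) (τ : Equiv.Perm (Fin n)) (k : Fin n) :
    DPerm l τ (l.succAbove k) = (τ k).castSucc := by
  simp [DPerm, Fin.succAbove_last]

lemma DPerm_bijective {n : ℕ} :
    Function.Bijective (fun p : Fin (n + 1) × Equiv.Perm (Fin n) => DPerm p.1 p.2) := by
  rw [Fintype.bijective_iff_injective_and_card]
  constructor
  · rintro ⟨l, τ⟩ ⟨l', τ'⟩ h
    simp only at h
    have hl : l = l' := by
      have h1 : DPerm l' τ' l = Fin.last n := by rw [← h]; exact DPerm_self l τ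
      exact (DPerm l' τ').injective (h1.trans (DPerm_self l' τ').symm)
    subst hl
    have hτ : τ = τ' := by
      ext k
      have h2 : DPerm l τ' (l.succAbove k) = (τ' k).castSucc := DPerm_succAbove l τ' k
      rw [← h, DPerm_succAbove] at h2
      exact congrArg Fin.val (Fin.castSucc_injective _ h2)
    simp [hτ]
  · simp [Fintype.card_perm, Fintype.card_prod, Fintype.card_fin, Nat.factorial_succ]

lemma ofFn_succAbove_eq {α : Type*} {n : ℕ} (f : Fin (n + 1) → α) (l : Fin (n + 1)) :
    List.ofFn f = (List.ofFn (fun k => f (l.succAbove k))).take (l : ℕ)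
      ++ f l :: (List.ofFn (fun k => f (l.succAbove k))).drop (l : ℕ) := by
  have hl : (l : ℕ) ≤ n := Fin.is_le l
  apply List.ext_getElem
  · simp; omega
  · intro i h1 h2
    simp only [List.length_ofFn] at h1
    rw [List.getElem_ofFn, List.getElem_append]
    simp only [List.length_take, List.length_ofFn]
    split
    · next h =>
      rw [List.getElem_take, List.getElem_ofFn]
      have hi : i < (l : ℕ) := by omega
      rw [Fin.succAbove_of_castSucc_lt _ _ (by simp only [Fin.lt_def, Fin.coe_castSucc]; omega)]
      congr 1
    · next h =>
      have hi : (l : ℕ) ≤ i := by omega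
      rw [List.getElem_cons]
      split
      · next h0 =>
        have : i = (l : ℕ) := by omega
        congr 1
        exact Fin.ext this
      · next h0 =>
        have hil : (l : ℕ) < i := by omega
        rw [List.getElem_drop, List.getElem_ofFn]
        rw [Fin.succAbove_of_le_castSucc _ _ (by simp only [Fin.le_def, Fin.coe_castSucc]; omega)]
        congr 1
        apply Fin.ext
        simp only [Fin.val_succ]
        omega

lemma ofFn_DPerm {α : Type*} {n : ℕ} (v : Fin (n + 1) → α) (l : Fin (n + 1))
    (τ : Equiv.Perm (Fin n)) :
    List.ofFn (fun i => v (DPerm l τ i)) =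
      (List.ofFn (fun k => v ((τ k).castSucc))).take (l : ℕ)
        ++ v (Fin.last n) :: (List.ofFn (fun k => v ((τ k).castSucc))).drop (l : ℕ) := by
  rw [ofFn_succAbove_eq (fun i => v (DPerm l τ i)) l]
  simp

lemma symProd_eq {A : Type*} [Ring A] {n : ℕ} (v : Fin (n + 1) → A) :
    symProd v = ∑ l : Fin (n + 1), ∑ τ : Equiv.Perm (Fin n),
      ((List.ofFn (fun k => v ((τ k).castSucc))).take (l : ℕ)
        ++ v (Fin.last n) :: (List.ofFn (fun k => v ((τ k).castSucc))).drop (l : ℕ)).prod := by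
  have h := Fintype.sum_bijective _ (DPerm_bijective (n := n))
      (fun p : Fin (n + 1) × Equiv.Perm (Fin n) =>
        (List.ofFn (fun i => v (DPerm p.1 p.2 i))).prod)
      (fun σ => (List.ofFn fun i => v (σ i)).prod) (fun p => rfl)
  rw [symProd, ← h, Fintype.sum_prod_type]
  exact Finset.sum_congr rfl fun l _ => Finset.sum_congr rfl fun τ _ => by
    rw [ofFn_DPerm]

lemma take_PyQ {α : Type*} (P Q : List α) (y : α) {n : ℕ} (hP : P.length = n) :
    (P ++ y :: Q).take (n + 1) = P ++ [y] := by
  rw [List.take_append, List.take_of_length_le (by omega)]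
  congr 1
  rw [hP, Nat.add_sub_cancel_left]
  rfl

lemma drop_PyQ {α : Type*} (P Q : List α) (y : α) {n : ℕ} (hP : P.length = n) :
    (P ++ y :: Q).drop (n + 1) = Q := by
  rw [List.drop_append, List.drop_of_length_le (by omega)]
  rw [hP, Nat.add_sub_cancel_left]
  rfl

lemma LB {A : Type*} [Ring A] (P Q : List A) (y x c : A) (l n : ℕ) (hP : P.length = n) :
    ((P ++ (y * x) :: Q).take l ++ c :: (P ++ (y * x) :: Q).drop l).prod
    = (((P ++ [y]) ++ x :: Q).take (if n < l then l + 1 else l)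
        ++ c :: ((P ++ [y]) ++ x :: Q).drop (if n < l then l + 1 else l)).prod := by
  rcases le_or_gt l n with h | h
  · rw [if_neg (by omega)]
    rw [List.take_append, List.take_append (l₁ := P ++ [y]),
      List.take_append (l₁ := P) (l₂ := [y]),
      List.drop_append, List.drop_append (l₁ := P ++ [y]),
      List.drop_append (l₁ := P) (l₂ := [y])]
    have h1 : l - P.length = 0 := by omega
    have h2 : l - (P.length + 1) = 0 := by omega
    simp [h1, h2, List.prod_append, List.prod_cons, mul_assoc]
  · rw [if_pos h]
    obtain ⟨k, rfl⟩ : ∃ k, l = n + 1 + k := ⟨l - (n + 1), by omega⟩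
    rw [List.take_append, List.take_of_length_le (by omega),
      List.drop_append, List.drop_of_length_le (by omega),
      List.take_append (l₁ := P ++ [y]),
      List.take_of_length_le (l := P ++ [y]) (by simp; omega),
      List.drop_append (l₁ := P ++ [y]),
      List.drop_of_length_le (l := P ++ [y]) (by simp; omega)]
    have h1 : n + 1 + k - P.length = k + 1 := by omega
    have h2 : n + 1 + k + 1 - (P.length + 1) = k + 1 := by omega
    simp [h1, h2, List.prod_append, List.prod_cons, mul_assoc]

lemma stepB {A : Type*} [Ring A] {m : ℕ} (a : Fin (m + 2) → A) (c : A)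
    (l : ℕ) (τ : Equiv.Perm (Fin (m + 1))) :
    ∑ σ : Equiv.Perm (Fin (m + 2)),
      (((List.ofFn fun k => (Fin.snoc (fun i : Fin m => a (σ (i.castSucc.castSucc)))
            (a (σ ((Fin.last m).castSucc)) * a (σ (Fin.last (m + 1)))) : Fin (m + 1) → A)
          (τ k)).take l)
        ++ c :: ((List.ofFn fun k => (Fin.snoc (fun i : Fin m => a (σ (i.castSucc.castSucc)))
            (a (σ ((Fin.last m).castSucc)) * a (σ (Fin.last (m + 1)))) : Fin (m + 1) → A)
          (τ k)).drop l)).prod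
    = ∑ σ : Equiv.Perm (Fin (m + 2)),
      (((List.ofFn fun i => a (σ i)).take
            (if ((τ⁻¹ (Fin.last m) : Fin (m + 1)) : ℕ) < l then l + 1 else l))
        ++ c :: ((List.ofFn fun i => a (σ i)).drop
            (if ((τ⁻¹ (Fin.last m) : Fin (m + 1)) : ℕ) < l then l + 1 else l))).prod := by
  set jf : Fin (m + 1) := τ⁻¹ (Fin.last m) with hjf
  apply Fintype.sum_bijective (fun σ => σ * DPerm jf.succ τ) (Group.mulRight_bijective _)
  intro σ
  set w : Fin (m + 1) → A := Fin.snoc (fun i : Fin m => a (σ (i.castSucc.castSucc)))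
      (a (σ ((Fin.last m).castSucc)) * a (σ (Fin.last (m + 1)))) with hw
  set u : Fin (m + 1) → A := fun k => a (σ ((τ k).castSucc)) with hu
  set x : A := a (σ (Fin.last (m + 1))) with hx
  have hτjf : τ jf = Fin.last m := by simp [hjf]
  have hwne : ∀ i : Fin (m + 1), i ≠ Fin.last m → w i = a (σ i.castSucc) := by
    intro i hi
    obtain ⟨t, rfl⟩ := Fin.exists_castSucc_eq.mpr hi
    rw [hw, Fin.snoc_castSucc]
  set V : List A := List.ofFn (fun k => u (jf.succAbove k)) with hV
  have hlenV : (V.take (jf : ℕ)).length = (jf : ℕ) := by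
    rw [List.length_take, hV, List.length_ofFn]
    exact Nat.min_eq_left (Fin.is_le jf)
  have hB : (List.ofFn fun k => w (τ k))
      = V.take (jf : ℕ) ++ (u jf * x) :: V.drop (jf : ℕ) := by
    rw [ofFn_succAbove_eq (fun k => w (τ k)) jf]
    have e1 : (fun k => w (τ (jf.succAbove k))) = fun k => u (jf.succAbove k) := by
      funext k
      have hne : τ (jf.succAbove k) ≠ Fin.last m := by
        intro hc
        exact Fin.succAbove_ne jf k (τ.injective (hc.trans hτjf.symm))
      rw [hwne _ hne]
    have e2 : w (τ jf) = u jf * x := by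
      rw [hτjf, hw, Fin.snoc_last, hu]
      simp only [hτjf]
    rw [e1, e2, hV]
  have hU : List.ofFn u = V.take (jf : ℕ) ++ u jf :: V.drop (jf : ℕ) :=
    ofFn_succAbove_eq u jf
  have hW : (List.ofFn fun i => a ((σ * DPerm jf.succ τ) i))
      = (V.take (jf : ℕ) ++ [u jf]) ++ x :: V.drop (jf : ℕ) := by
    have e3 : (List.ofFn fun i => a ((σ * DPerm jf.succ τ) i))
        = List.ofFn (fun i => a (σ (DPerm jf.succ τ i))) := by
      simp only [Equiv.Perm.mul_apply]
    rw [e3, ofFn_DPerm (fun p => a (σ p)) jf.succ τ]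
    rw [show (List.ofFn fun k => a (σ ((τ k).castSucc))) = List.ofFn u from rfl]
    rw [Fin.val_succ, hU, take_PyQ _ _ _ hlenV, drop_PyQ _ _ _ hlenV]
  rw [hB, LB (V.take (jf : ℕ)) (V.drop (jf : ℕ)) (u jf) x c l (jf : ℕ) hlenV, ← hW]

lemma count_lemma {M : Type*} [AddCommGroup M] (G : ℕ → M) (m j : ℕ) (hj : j ≤ m) :
    ∑ l ∈ Finset.range (m + 2), G (if j < l then l + 1 else l)
      = ∑ t ∈ Finset.range (m + 3), G t - G (j + 1) := by
  rw [eq_sub_iff_add_eq, ← Finset.sum_erase_add (Finset.range (m + 3)) G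
    (a := j + 1) (Finset.mem_range.mpr (by omega))]
  congr 1
  refine Finset.sum_nbij' (i := fun l => if j < l then l + 1 else l)
    (j := fun t => if t ≤ j then t else t - 1) ?_ ?_ ?_ ?_ ?_
  · intro t ht
    simp only [Finset.mem_range] at ht
    simp only [Finset.mem_erase, Finset.mem_range]
    (try dsimp only)
    split_ifs <;> omega
  · intro t ht
    simp only [Finset.mem_erase, Finset.mem_range] at ht
    simp only [Finset.mem_range]
    (try dsimp only)
    split_ifs <;> omega
  · intro t ht
    simp only [Finset.mem_range] at ht
    (try dsimp only)
    split_ifs <;> omega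
  · intro t ht
    simp only [Finset.mem_erase, Finset.mem_range] at ht
    (try dsimp only)
    split_ifs <;> omega
  · intro t _
    rfl

/-- `G t`: the fully symmetrized `a`-word with `c` inserted at position `t`. -/
def Gdef {A : Type*} [Ring A] {m : ℕ} (a : Fin (m + 2) → A) (c : A) (t : ℕ) : A :=
  ∑ σ : Equiv.Perm (Fin (m + 2)),
    (((List.ofFn fun i => a (σ i)).take t) ++ c :: ((List.ofFn fun i => a (σ i)).drop t)).prod

end Aux

/-- with `n = m+2 ≥ 2`,
`Σ_σ πₙ(a_{σ(1)},…,a_{σ(n-2)},a_{σ(n-1)}a_{σ(n)},c)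
 = (n-1)! Σ_σ [a_{σ(1)}⋯a_{σ(n)}c + c a_{σ(1)}⋯a_{σ(n)}]
 + (n-2)(n-2)! Σ_σ Σ` over the `n-1` interior insertion positions of `c`. -/
theorem stmt13 {A : Type*} [Ring A] (m : ℕ) (a : Fin (m + 2) → A) (c : A) :
    ∑ σ : Equiv.Perm (Fin (m + 2)),
      symProd (Fin.snoc
        (Fin.snoc (fun i : Fin m => a (σ (i.castSucc.castSucc)))
          (a (σ ((Fin.last m).castSucc)) * a (σ (Fin.last (m + 1))))) c) =
    (m + 1).factorial •
      (∑ σ : Equiv.Perm (Fin (m + 2)),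
        ((List.ofFn fun i => a (σ i)).prod * c + c * (List.ofFn fun i => a (σ i)).prod)) +
    (m * m.factorial) •
      ∑ σ : Equiv.Perm (Fin (m + 2)), ∑ l ∈ Finset.Icc 1 (m + 1),
        (((List.ofFn fun i => a (σ i)).take l) ++
          c :: ((List.ofFn fun i => a (σ i)).drop l)).prod := by
  have hA : ∀ σ : Equiv.Perm (Fin (m + 2)),
      symProd (Fin.snoc (Fin.snoc (fun i : Fin m => a (σ (i.castSucc.castSucc)))
          (a (σ ((Fin.last m).castSucc)) * a (σ (Fin.last (m + 1))))) c)
      = ∑ l : Fin (m + 2), ∑ τ : Equiv.Perm (Fin (m + 1)),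
          (((List.ofFn fun k => (Fin.snoc (fun i : Fin m => a (σ (i.castSucc.castSucc)))
              (a (σ ((Fin.last m).castSucc)) * a (σ (Fin.last (m + 1)))) : Fin (m + 1) → A)
              (τ k)).take (l : ℕ))
            ++ c :: ((List.ofFn fun k => (Fin.snoc (fun i : Fin m => a (σ (i.castSucc.castSucc)))
              (a (σ ((Fin.last m).castSucc)) * a (σ (Fin.last (m + 1)))) : Fin (m + 1) → A)
              (τ k)).drop (l : ℕ))).prod := by
    intro σ
    rw [symProd_eq]
    simp only [Fin.snoc_castSucc, Fin.snoc_last]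
  have hG0 : Gdef a c 0
      = ∑ σ : Equiv.Perm (Fin (m + 2)), c * (List.ofFn fun i => a (σ i)).prod := by
    unfold Gdef
    simp
  have hGtop : Gdef a c (m + 2)
      = ∑ σ : Equiv.Perm (Fin (m + 2)), (List.ofFn fun i => a (σ i)).prod * c := by
    unfold Gdef
    refine Finset.sum_congr rfl fun σ _ => ?_
    rw [List.take_of_length_le (by simp), List.drop_of_length_le (by simp)]
    simp [mul_assoc]
  have hIcc : ∑ t ∈ Finset.Icc 1 (m + 1), Gdef a c t
      = ∑ t ∈ Finset.range (m + 1), Gdef a c (t + 1) := by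
    refine Finset.sum_nbij' (i := fun t => t - 1) (j := fun t => t + 1) ?_ ?_ ?_ ?_ ?_
    · intro t ht; simp only [Finset.mem_Icc] at ht; simp only [Finset.mem_range]; (try dsimp only); omega
    · intro t ht; simp only [Finset.mem_range] at ht; simp only [Finset.mem_Icc]; (try dsimp only); omega
    · intro t ht; simp only [Finset.mem_Icc] at ht; (try dsimp only); omega
    · intro t _; (try dsimp only); omega
    · intro t ht; simp only [Finset.mem_Icc] at ht; (try dsimp only); congr 1; omega
  have hcount2 : ∑ τ : Equiv.Perm (Fin (m + 1)),
        Gdef a c (((τ⁻¹ (Fin.last m) : Fin (m + 1)) : ℕ) + 1)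
      = m.factorial • ∑ t ∈ Finset.range (m + 1), Gdef a c (t + 1) := by
    have h := Fintype.sum_bijective _ (DPerm_bijective (n := m))
      (fun p : Fin (m + 1) × Equiv.Perm (Fin m) => Gdef a c ((p.1 : ℕ) + 1))
      (fun τ => Gdef a c (((τ⁻¹ (Fin.last m) : Fin (m + 1)) : ℕ) + 1))
      (fun p => by
        have hp : ((DPerm p.1 p.2)⁻¹ (Fin.last m)) = p.1 := by
          conv_lhs => rw [← DPerm_self p.1 p.2]
          exact (DPerm p.1 p.2).symm_apply_apply _
        rw [hp])
    rw [← h, Fintype.sum_prod_type]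
    simp only [Finset.sum_const, Finset.card_univ, Fintype.card_perm, Fintype.card_fin]
    rw [← Finset.smul_sum, Fin.sum_univ_eq_sum_range (fun t => Gdef a c (t + 1)) (m + 1)]
  have hsplit : ∑ t ∈ Finset.range (m + 3), Gdef a c t
      = Gdef a c 0 + (∑ t ∈ Finset.range (m + 1), Gdef a c (t + 1)) + Gdef a c (m + 2) := by
    rw [Finset.sum_range_succ, Finset.sum_range_succ' (fun t => Gdef a c t) (m + 1)]
    abel
  have h1 : ∑ σ : Equiv.Perm (Fin (m + 2)),
      symProd (Fin.snoc
        (Fin.snoc (fun i : Fin m => a (σ (i.castSucc.castSucc)))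
          (a (σ ((Fin.last m).castSucc)) * a (σ (Fin.last (m + 1))))) c)
      = ∑ τ : Equiv.Perm (Fin (m + 1)), ∑ l ∈ Finset.range (m + 2),
          Gdef a c (if ((τ⁻¹ (Fin.last m) : Fin (m + 1)) : ℕ) < l then l + 1 else l) := by
    rw [Finset.sum_congr rfl fun σ _ => hA σ, Finset.sum_comm]
    refine Eq.trans (Finset.sum_congr rfl fun l _ => Eq.trans Finset.sum_comm
      (Finset.sum_congr rfl fun τ _ => stepB a c (l : ℕ) τ)) ?_
    rw [Finset.sum_comm]
    exact Finset.sum_congr rfl fun τ _ => Fin.sum_univ_eq_sum_range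
      (fun l => Gdef a c (if ((τ⁻¹ (Fin.last m) : Fin (m + 1)) : ℕ) < l then l + 1 else l))
      (m + 2)
  have hR1 : ∑ σ : Equiv.Perm (Fin (m + 2)),
        ((List.ofFn fun i => a (σ i)).prod * c + c * (List.ofFn fun i => a (σ i)).prod)
      = Gdef a c (m + 2) + Gdef a c 0 := by
    rw [Finset.sum_add_distrib, hGtop, hG0]
  have hR2 : ∑ σ : Equiv.Perm (Fin (m + 2)), ∑ l ∈ Finset.Icc 1 (m + 1),
        (((List.ofFn fun i => a (σ i)).take l) ++
          c :: ((List.ofFn fun i => a (σ i)).drop l)).prod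
      = ∑ t ∈ Finset.range (m + 1), Gdef a c (t + 1) := by
    rw [Finset.sum_comm]
    exact hIcc
  rw [h1, Finset.sum_congr rfl fun τ _ =>
      count_lemma (Gdef a c) m _ (Fin.is_le (τ⁻¹ (Fin.last m))),
    Finset.sum_sub_distrib, Finset.sum_const, Finset.card_univ, Fintype.card_perm,
    Fintype.card_fin, hcount2, hsplit, hR1, hR2]
  have hfac : (m + 1).factorial = m * m.factorial + m.factorial := by
    rw [Nat.factorial_succ]; ring
  rw [hfac]
  simp only [smul_add, add_nsmul]
  abel
end

section
/- Let X and Y be complex Banach spaces with X* having the bounded approximation property, let P : 𝓐(X) → Y be a continuous orthogonally additive n-homogeneous polynomial with associated continuous symmetric n-linear map φ, let Φ : 𝓐(X) → Y be the (unique) continuous linear map with P(T) = Φ(Tⁿ) for all T, and let (E_λ)_{λ∈Λ} be any bounded approximate identity for 𝓐(X). Then for every T ∈ 𝓐(X), the net (φ(T, E_λ, ..., E_λ))_{λ∈Λ} converges in norm to Φ(T). -/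
open Filter Topology

/-- The algebra `𝓕(X)` of finite-rank bounded operators on `X`, as a
submodule of `X →L[ℂ] X` (it is moreover a two-sided ideal of `𝓑(X)`). -/
noncomputable def FinRankOps (X : Type*) [NormedAddCommGroup X] [NormedSpace ℂ X] :
    Submodule ℂ (X →L[ℂ] X) where
  carrier := {T | FiniteDimensional ℂ (LinearMap.range (T : X →ₗ[ℂ] X))}
  add_mem' := by
    intro a b ha hb
    have h : LinearMap.range ((a + b : X →L[ℂ] X) : X →ₗ[ℂ] X) ≤
        LinearMap.range ((a : X →L[ℂ] X) : X →ₗ[ℂ] X) ⊔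
        LinearMap.range ((b : X →L[ℂ] X) : X →ₗ[ℂ] X) := by
      rintro x ⟨y, rfl⟩
      exact Submodule.mem_sup.2 ⟨a y, ⟨y, rfl⟩, b y, ⟨y, rfl⟩, by simp⟩
    haveI : FiniteDimensional ℂ (LinearMap.range ((a : X →L[ℂ] X) : X →ₗ[ℂ] X)) := ha
    haveI : FiniteDimensional ℂ (LinearMap.range ((b : X →L[ℂ] X) : X →ₗ[ℂ] X)) := hb
    exact Submodule.finiteDimensional_of_le h
  zero_mem' := by
    simp only [Set.mem_setOf_eq]
    rw [show ((0 : X →L[ℂ] X) : X →ₗ[ℂ] X) = 0 from rfl, LinearMap.range_zero]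
    infer_instance
  smul_mem' := by
    intro c a ha
    have h : LinearMap.range ((c • a : X →L[ℂ] X) : X →ₗ[ℂ] X) ≤
        LinearMap.range ((a : X →L[ℂ] X) : X →ₗ[ℂ] X) := by
      rintro x ⟨y, rfl⟩
      exact ⟨c • y, by simp⟩
    haveI : FiniteDimensional ℂ (LinearMap.range ((a : X →L[ℂ] X) : X →ₗ[ℂ] X)) := ha
    exact Submodule.finiteDimensional_of_le h

/-- The algebra `𝓐(X)` of approximable operators on `X`: the operator-norm
closure of the finite-rank operators. -/
noncomputable def ApproxOps (X : Type*) [NormedAddCommGroup X] [NormedSpace ℂ X] :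
    Submodule ℂ (X →L[ℂ] X) := (FinRankOps X).topologicalClosure

/-- `X*` has the bounded approximation property. -/
def DualHasBAP (X : Type*) [NormedAddCommGroup X] [NormedSpace ℂ X] : Prop :=
  ∃ C : ℝ, 0 < C ∧ ∀ (F : Finset (X →L[ℂ] ℂ)) (ε : ℝ), 0 < ε →
    ∃ S : (X →L[ℂ] ℂ) →L[ℂ] (X →L[ℂ] ℂ),
      FiniteDimensional ℂ (LinearMap.range (S : (X →L[ℂ] ℂ) →ₗ[ℂ] (X →L[ℂ] ℂ))) ∧
      ‖S‖ ≤ C ∧ ∀ f ∈ F, ‖S f - f‖ < ε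

section Aux

variable {X : Type*} [NormedAddCommGroup X] [NormedSpace ℂ X]

lemma FinRankOps.mul_left (a : X →L[ℂ] X) {b : X →L[ℂ] X} (hb : b ∈ FinRankOps X) :
    a * b ∈ FinRankOps X := by
  haveI hb' : FiniteDimensional ℂ (LinearMap.range (b : X →ₗ[ℂ] X)) := hb
  show FiniteDimensional ℂ (LinearMap.range ((a * b : X →L[ℂ] X) : X →ₗ[ℂ] X))
  have h : ((a * b : X →L[ℂ] X) : X →ₗ[ℂ] X)
      = (a : X →ₗ[ℂ] X).comp (b : X →ₗ[ℂ] X) := rfl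
  rw [h, LinearMap.range_comp]
  exact Module.Finite.map _ _

lemma FinRankOps.mul_right {b : X →L[ℂ] X} (hb : b ∈ FinRankOps X) (a : X →L[ℂ] X) :
    b * a ∈ FinRankOps X := by
  haveI hb' : FiniteDimensional ℂ (LinearMap.range (b : X →ₗ[ℂ] X)) := hb
  show FiniteDimensional ℂ (LinearMap.range ((b * a : X →L[ℂ] X) : X →ₗ[ℂ] X))
  have h : ((b * a : X →L[ℂ] X) : X →ₗ[ℂ] X)
      = (b : X →ₗ[ℂ] X).comp (a : X →ₗ[ℂ] X) := rfl
  rw [h]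
  exact Submodule.finiteDimensional_of_le (LinearMap.range_comp_le_range _ _)

lemma ApproxOps.mul_left (a : X →L[ℂ] X) {b : X →L[ℂ] X} (hb : b ∈ ApproxOps X) :
    a * b ∈ ApproxOps X := by
  have hb' : b ∈ closure (FinRankOps X : Set (X →L[ℂ] X)) := hb
  exact map_mem_closure (continuous_mul_left a) hb'
    (fun y hy => FinRankOps.mul_left a hy)

lemma ApproxOps.mul_right {b : X →L[ℂ] X} (hb : b ∈ ApproxOps X) (a : X →L[ℂ] X) :
    b * a ∈ ApproxOps X := by
  have hb' : b ∈ closure (FinRankOps X : Set (X →L[ℂ] X)) := hb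
  exact map_mem_closure (f := fun y => y * a) (continuous_mul_right a) hb'
    (fun y hy => FinRankOps.mul_right hy a)

/-- Transfer a derivative through the (isometric) inclusion of a submodule. -/
lemma HasDerivAt.of_submodule_coe {E : Type*} [NormedAddCommGroup E] [NormedSpace ℂ E]
    {p : Submodule ℂ E} {f : ℂ → p} {f' : p} {x : ℂ}
    (h : HasDerivAt (fun t => (f t : E)) ((f' : E)) x) : HasDerivAt f f' x := by
  rw [hasDerivAt_iff_tendsto] at h ⊢
  have hfun : ∀ t : ℂ, ‖f t - f x - (t - x) • f'‖
      = ‖(f t : E) - (f x : E) - (t - x) • (f' : E)‖ := by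
    intro t
    rw [← Submodule.norm_coe]
    norm_cast
  simpa only [hfun] using h

/-- Derivative of `t ↦ (S + t•T)^m` at `0` in a normed algebra. -/
lemma hasDerivAt_affine_pow {R : Type*} [NormedRing R] [NormedAlgebra ℂ R]
    (S T : R) (m : ℕ) :
    HasDerivAt (fun t : ℂ => (S + t • T) ^ m)
      (∑ k ∈ Finset.range m, S ^ k * T * S ^ (m - 1 - k)) 0 := by
  induction m with
  | zero => simpa using hasDerivAt_const (0 : ℂ) (1 : R)
  | succ m ih =>
    have hbase : HasDerivAt (fun t : ℂ => S + t • T) T 0 := by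
      simpa using ((hasDerivAt_id (0 : ℂ)).smul_const T).const_add S
    have h := ih.mul hbase
    have hS0 : S + (0 : ℂ) • T = S := by simp
    have hval : (∑ k ∈ Finset.range m, S ^ k * T * S ^ (m - 1 - k)) * (S + (0:ℂ) • T)
        + (S + (0:ℂ) • T) ^ m * T
        = ∑ k ∈ Finset.range (m + 1), S ^ k * T * S ^ (m + 1 - 1 - k) := by
      rw [hS0, Finset.sum_range_succ, Finset.sum_mul]
      congr 1
      · refine Finset.sum_congr rfl fun k hk => ?_
        have hk' : k < m := Finset.mem_range.mp hk
        have hnat : m - 1 - k + 1 = m + 1 - 1 - k := by omega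
        rw [mul_assoc (S ^ k * T), ← pow_succ, hnat]
      · have : m + 1 - 1 - m = 0 := by omega
        rw [this, pow_zero, mul_one]
    have h2 : HasDerivAt (fun t : ℂ => (S + t • T) ^ m * (S + t • T))
        (∑ k ∈ Finset.range (m + 1), S ^ k * T * S ^ (m + 1 - 1 - k)) 0 := by
      rw [← hval]; exact h
    have hfun : (fun t : ℂ => (S + t • T) ^ m * (S + t • T))
        = fun t : ℂ => (S + t • T) ^ (m + 1) := by
      funext t; rw [← pow_succ]
    rwa [hfun] at h2

end Aux

set_option maxHeartbeats 1000000 in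
set_option synthInstance.maxHeartbeats 400000 in
/-- if `Φ` is the continuous linear map representing a continuous
orthogonally additive homogeneous polynomial `P` on `𝓐(X)` (with associated
continuous symmetric multilinear map `φ`, here of `n+1 ≥ 1` variables), then
for any bounded approximate identity `(E_λ)` of `𝓐(X)`, the net
`φ(T, E_λ, …, E_λ)` converges in norm to `Φ T`. -/
theorem stmt18 {X Y : Type*} [NormedAddCommGroup X] [NormedSpace ℂ X] [CompleteSpace X]
    [NormedAddCommGroup Y] [NormedSpace ℂ Y] [CompleteSpace Y]
    (hBAP : DualHasBAP X)
    (n : ℕ)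
    (P : ↥(ApproxOps X) → Y)
    (φ : ContinuousMultilinearMap ℂ (fun _ : Fin (n + 1) => ↥(ApproxOps X)) Y)
    (hsym : ∀ (σ : Equiv.Perm (Fin (n + 1))) (v : Fin (n + 1) → ↥(ApproxOps X)),
      φ (fun i => v (σ i)) = φ v)
    (hP : ∀ T, P T = φ (fun _ => T))
    (horth : ∀ S T : ↥(ApproxOps X),
      (S : X →L[ℂ] X) * (T : X →L[ℂ] X) = 0 → (T : X →L[ℂ] X) * (S : X →L[ℂ] X) = 0 →
      P (S + T) = P S + P T)
    (Φ : ↥(ApproxOps X) →L[ℂ] Y)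
    (hΦ : ∀ T Tn : ↥(ApproxOps X),
      (Tn : X →L[ℂ] X) = (T : X →L[ℂ] X) ^ (n + 1) → P T = Φ Tn)
    {Λ : Type*} [Preorder Λ] [IsDirected Λ (· ≤ ·)] [Nonempty Λ]
    (E : Λ → ↥(ApproxOps X)) (C : ℝ) (hC : ∀ l, ‖(E l : X →L[ℂ] X)‖ ≤ C)
    (hBAI : ∀ a : ↥(ApproxOps X),
      Tendsto (fun l => (E l : X →L[ℂ] X) * (a : X →L[ℂ] X)) atTop (𝓝 (a : X →L[ℂ] X)) ∧
      Tendsto (fun l => (a : X →L[ℂ] X) * (E l : X →L[ℂ] X)) atTop (𝓝 (a : X →L[ℂ] X))) :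
    ∀ T : ↥(ApproxOps X),
      Tendsto (fun l => φ (Fin.cons T (fun _ => E l))) atTop (𝓝 (Φ T)) := by
  classical
  set D : ℝ := max C 1 with hD
  have hD1 : (1 : ℝ) ≤ D := le_max_right _ _
  have hE : ∀ l, ‖(E l : X →L[ℂ] X)‖ ≤ D := fun l => (hC l).trans (le_max_left _ _)
  have hEk : ∀ (l : Λ) (k : ℕ), k ≤ n → ‖(E l : X →L[ℂ] X) ^ k‖ ≤ D ^ n := by
    intro l k hk
    rcases Nat.eq_zero_or_pos k with rfl | hk0
    · rw [pow_zero]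
      calc ‖(1 : X →L[ℂ] X)‖ ≤ 1 := by
            rw [ContinuousLinearMap.one_def]; exact ContinuousLinearMap.norm_id_le
        _ ≤ D ^ n := one_le_pow₀ hD1
    · calc ‖(E l : X →L[ℂ] X) ^ k‖ ≤ ‖(E l : X →L[ℂ] X)‖ ^ k := norm_pow_le' _ hk0
        _ ≤ D ^ k := pow_le_pow_left₀ (norm_nonneg _) (hE l) k
        _ ≤ D ^ n := pow_le_pow_right₀ hD1 hk
  -- left and right multiplication by powers of the BAI
  have hleft : ∀ (a : ↥(ApproxOps X)) (k : ℕ),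
      Tendsto (fun l => (E l : X →L[ℂ] X) ^ k * (a : X →L[ℂ] X)) atTop
        (𝓝 (a : X →L[ℂ] X)) := by
    intro a k
    induction k with
    | zero => simpa using (tendsto_const_nhds :
        Tendsto (fun _ : Λ => (a : X →L[ℂ] X)) atTop (𝓝 (a : X →L[ℂ] X)))
    | succ k ih =>
      have hzero : Tendsto
          (fun l => ‖(E l : X →L[ℂ] X) ^ k * (a : X →L[ℂ] X) - (a : X →L[ℂ] X)‖)
          atTop (𝓝 0) := tendsto_iff_norm_sub_tendsto_zero.mp ih
      have h0 : Tendsto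
          (fun l => (E l : X →L[ℂ] X) *
            ((E l : X →L[ℂ] X) ^ k * (a : X →L[ℂ] X) - (a : X →L[ℂ] X)))
          atTop (𝓝 0) := by
        refine squeeze_zero_norm (a := fun l =>
            D * ‖(E l : X →L[ℂ] X) ^ k * (a : X →L[ℂ] X) - (a : X →L[ℂ] X)‖)
            (fun l => ?_) ?_
        · exact (norm_mul_le _ _).trans
            (mul_le_mul_of_nonneg_right (hE l) (norm_nonneg _))
        · simpa using (tendsto_const_nhds (x := D)).mul hzero
      have hsum := h0.add (hBAI a).1
      rw [zero_add] at hsum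
      refine hsum.congr fun l => ?_
      rw [mul_sub, sub_add_cancel, ← mul_assoc, ← pow_succ']
  have hright : ∀ (a : ↥(ApproxOps X)) (k : ℕ),
      Tendsto (fun l => (a : X →L[ℂ] X) * (E l : X →L[ℂ] X) ^ k) atTop
        (𝓝 (a : X →L[ℂ] X)) := by
    intro a k
    induction k with
    | zero => simpa using (tendsto_const_nhds :
        Tendsto (fun _ : Λ => (a : X →L[ℂ] X)) atTop (𝓝 (a : X →L[ℂ] X)))
    | succ k ih =>
      have hzero : Tendsto
          (fun l => ‖(a : X →L[ℂ] X) * (E l : X →L[ℂ] X) ^ k - (a : X →L[ℂ] X)‖)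
          atTop (𝓝 0) := tendsto_iff_norm_sub_tendsto_zero.mp ih
      have h0 : Tendsto
          (fun l => ((a : X →L[ℂ] X) * (E l : X →L[ℂ] X) ^ k - (a : X →L[ℂ] X)) *
            (E l : X →L[ℂ] X)) atTop (𝓝 0) := by
        refine squeeze_zero_norm (a := fun l =>
            ‖(a : X →L[ℂ] X) * (E l : X →L[ℂ] X) ^ k - (a : X →L[ℂ] X)‖ * D)
            (fun l => ?_) ?_
        · exact (norm_mul_le _ _).trans
            (mul_le_mul_of_nonneg_left (hE l) (norm_nonneg _))
        · simpa using hzero.mul (tendsto_const_nhds (x := D))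
      have hsum := h0.add (hBAI a).2
      rw [zero_add] at hsum
      refine hsum.congr fun l => ?_
      rw [sub_mul, sub_add_cancel, mul_assoc, ← pow_succ]
  have hmid : ∀ (a : ↥(ApproxOps X)) (k : ℕ), k ≤ n →
      Tendsto (fun l => (E l : X →L[ℂ] X) ^ k * (a : X →L[ℂ] X) *
        (E l : X →L[ℂ] X) ^ (n - k)) atTop (𝓝 (a : X →L[ℂ] X)) := by
    intro a k hk
    have hzero : Tendsto
        (fun l => ‖(E l : X →L[ℂ] X) ^ k * (a : X →L[ℂ] X) - (a : X →L[ℂ] X)‖)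
        atTop (𝓝 0) := tendsto_iff_norm_sub_tendsto_zero.mp (hleft a k)
    have h0 : Tendsto
        (fun l => ((E l : X →L[ℂ] X) ^ k * (a : X →L[ℂ] X) - (a : X →L[ℂ] X)) *
          (E l : X →L[ℂ] X) ^ (n - k)) atTop (𝓝 0) := by
      refine squeeze_zero_norm (a := fun l =>
          ‖(E l : X →L[ℂ] X) ^ k * (a : X →L[ℂ] X) - (a : X →L[ℂ] X)‖ * D ^ n)
          (fun l => ?_) ?_
      · exact (norm_mul_le _ _).trans
          (mul_le_mul_of_nonneg_left (hEk l (n - k) (Nat.sub_le _ _)) (norm_nonneg _))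
      · simpa using hzero.mul (tendsto_const_nhds (x := D ^ n))
    have hsum := h0.add (hright a (n - k))
    rw [zero_add] at hsum
    refine hsum.congr fun l => ?_
    rw [sub_mul, sub_add_cancel]
  -- membership lemmas
  have hmemPow : ∀ (S T : ↥(ApproxOps X)) (t : ℂ),
      ((S : X →L[ℂ] X) + t • (T : X →L[ℂ] X)) ^ (n + 1) ∈ ApproxOps X := by
    intro S T t
    have hc : (S : X →L[ℂ] X) + t • (T : X →L[ℂ] X) ∈ ApproxOps X :=
      Submodule.add_mem _ S.2 (Submodule.smul_mem _ t T.2)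
    rw [pow_succ]
    exact ApproxOps.mul_left _ hc
  have hmemSum : ∀ S T : ↥(ApproxOps X),
      (∑ k ∈ Finset.range (n + 1),
        (S : X →L[ℂ] X) ^ k * (T : X →L[ℂ] X) * (S : X →L[ℂ] X) ^ (n - k))
        ∈ ApproxOps X := fun S T =>
    Submodule.sum_mem _ fun k _ => ApproxOps.mul_right (ApproxOps.mul_left _ T.2) _
  -- the key polarization identity
  have key : ∀ S T : ↥(ApproxOps X),
      (n + 1) • φ (Fin.cons T (fun _ => S)) = Φ ⟨_, hmemSum S T⟩ := by
    intro S T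
    have hcD : HasDerivAt (fun t : ℂ => (fun _ : Fin (n + 1) => S + t • T))
        (fun _ => T) 0 := by
      rw [hasDerivAt_pi]
      intro i
      convert ((ContinuousLinearMap.smulRight (1 : ℂ →L[ℂ] ℂ) T).hasFDerivAt
        (x := (0 : ℂ))).hasDerivAt.const_add (𝕜 := ℂ) (F := ↥(ApproxOps X)) S using 1
      · rfl
      · rfl
      · funext t; simp
      · simp
    have hc0 : (fun _ : Fin (n + 1) => S + (0 : ℂ) • T) = (fun _ => S) := by
      funext i; simp
    have hF : HasDerivAt (fun t : ℂ => φ (fun _ => S + t • T))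
        ((φ.linearDeriv (fun _ => S + (0 : ℂ) • T)) (fun _ => T)) 0 :=
      (φ.hasFDerivAt _).comp_hasDerivAt 0 hcD
    have hupd : ∀ i : Fin (n + 1),
        φ (Function.update (fun _ : Fin (n + 1) => S) i T)
          = φ (Fin.cons T (fun _ => S)) := by
      intro i
      rw [← hsym (Equiv.swap 0 i) (Fin.cons T (fun _ => S))]
      congr 1
      funext j
      rcases eq_or_ne j i with rfl | hj
      · rw [Function.update_self, Equiv.swap_apply_right, Fin.cons_zero]
      · rw [Function.update_of_ne hj]
        rcases eq_or_ne j 0 with rfl | hj0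
        · rw [Equiv.swap_apply_left]
          cases i using Fin.cases with
          | zero => exact absurd rfl hj
          | succ i' => rw [Fin.cons_succ]
        · rw [Equiv.swap_apply_of_ne_of_ne hj0 hj]
          cases j using Fin.cases with
          | zero => exact absurd rfl hj0
          | succ j' => rw [Fin.cons_succ]
    have hFval : (φ.linearDeriv (fun _ : Fin (n + 1) => S + (0 : ℂ) • T)) (fun _ => T)
        = (n + 1) • φ (Fin.cons T (fun _ => S)) := by
      rw [hc0, ContinuousMultilinearMap.linearDeriv_apply]
      simp only [hupd]
      simp
    have haff : HasDerivAt
        (fun t : ℂ => ((S : X →L[ℂ] X) + t • (T : X →L[ℂ] X)) ^ (n + 1))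
        (∑ k ∈ Finset.range (n + 1),
          (S : X →L[ℂ] X) ^ k * (T : X →L[ℂ] X) * (S : X →L[ℂ] X) ^ (n - k)) 0 := by
      simpa only [Nat.add_sub_cancel] using
        hasDerivAt_affine_pow (S : X →L[ℂ] X) (T : X →L[ℂ] X) (n + 1)
    have hg : HasDerivAt
        (fun t : ℂ => (⟨((S : X →L[ℂ] X) + t • (T : X →L[ℂ] X)) ^ (n + 1),
          hmemPow S T t⟩ : ↥(ApproxOps X)))
        (⟨_, hmemSum S T⟩ : ↥(ApproxOps X)) 0 :=
      HasDerivAt.of_submodule_coe haff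
    have hG : HasDerivAt
        (fun t : ℂ => Φ (⟨((S : X →L[ℂ] X) + t • (T : X →L[ℂ] X)) ^ (n + 1),
          hmemPow S T t⟩ : ↥(ApproxOps X)))
        (Φ ⟨_, hmemSum S T⟩) 0 := Φ.hasFDerivAt.comp_hasDerivAt (F := ↥(ApproxOps X)) (0 : ℂ) hg
    have hFG : (fun t : ℂ => φ (fun _ => S + t • T))
        = fun t : ℂ => Φ (⟨((S : X →L[ℂ] X) + t • (T : X →L[ℂ] X)) ^ (n + 1),
            hmemPow S T t⟩ : ↥(ApproxOps X)) := by
      funext t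
      rw [← hP (S + t • T)]
      refine hΦ (S + t • T) _ ?_
      norm_cast
    have hF' : HasDerivAt (fun t : ℂ => φ (fun _ => S + t • T))
        (Φ ⟨_, hmemSum S T⟩) 0 := by
      rw [hFG]; exact hG
    rw [← hFval]
    exact hF.unique hF'
  -- conclusion
  intro T
  have hc0 : ((n + 1 : ℕ) : ℂ) ≠ 0 := by exact_mod_cast Nat.succ_ne_zero n
  have hsum : Tendsto (fun l => ∑ k ∈ Finset.range (n + 1),
      (E l : X →L[ℂ] X) ^ k * (T : X →L[ℂ] X) * (E l : X →L[ℂ] X) ^ (n - k))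
      atTop (𝓝 ((n + 1) • (T : X →L[ℂ] X))) := by
    have h := tendsto_finset_sum (Finset.range (n + 1))
      (fun k hk => hmid T k (Nat.lt_succ_iff.mp (Finset.mem_range.mp hk)))
    simpa only [Finset.sum_const, Finset.card_range] using h
  have hlim : Tendsto (fun l => (⟨_, hmemSum (E l) T⟩ : ↥(ApproxOps X)))
      atTop (𝓝 ((n + 1) • T)) := by
    rw [tendsto_subtype_rng]
    have hco : (((n + 1) • T : ↥(ApproxOps X)) : X →L[ℂ] X)
        = (n + 1) • (T : X →L[ℂ] X) := rfl
    rw [hco]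
    exact hsum
  have h2 : Tendsto (fun l => Φ (⟨_, hmemSum (E l) T⟩ : ↥(ApproxOps X)))
      atTop (𝓝 (Φ ((n + 1) • T))) := (Φ.continuous.tendsto _).comp hlim
  have h3 : Tendsto (fun l => ((n + 1 : ℕ) : ℂ)⁻¹ •
      Φ (⟨_, hmemSum (E l) T⟩ : ↥(ApproxOps X)))
      atTop (𝓝 (((n + 1 : ℕ) : ℂ)⁻¹ • Φ ((n + 1) • T))) := h2.const_smul _
  have hvalφ : ∀ l, φ (Fin.cons T (fun _ => E l))
      = ((n + 1 : ℕ) : ℂ)⁻¹ • Φ (⟨_, hmemSum (E l) T⟩ : ↥(ApproxOps X)) := by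
    intro l
    rw [← key (E l) T, ← Nat.cast_smul_eq_nsmul ℂ (n + 1), inv_smul_smul₀ hc0]
  have hfin : ((n + 1 : ℕ) : ℂ)⁻¹ • Φ ((n + 1) • T) = Φ T := by
    rw [map_nsmul, ← Nat.cast_smul_eq_nsmul ℂ (n + 1), inv_smul_smul₀ hc0]
  simp only [hvalφ]
  rw [← hfin]
  exact h3
end

section
/- Let A be an algebra, Y a vector space, and Φ, Ψ : A → Y linear maps such that Φ(aⁿ) = Ψ(aⁿ) for all a ∈ A. Suppose every element a ∈ A admits b ∈ A with ab = ba = a (local unitality). Then Φ = Ψ. -/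
/-- `nupow a m = a ^ (m + 1)`, the `(m+1)`-st power of `a` in a possibly
non-unital multiplicative structure. -/
def nupow {A : Type*} [Mul A] (a : A) (m : ℕ) : A :=
  List.foldl (· * ·) a (List.replicate m a)

lemma nupow_zero {A : Type*} [Mul A] (a : A) : nupow a 0 = a := rfl

lemma nupow_succ {A : Type*} [Mul A] (a : A) (m : ℕ) :
    nupow a (m + 1) = nupow a m * a := by
  simp [nupow, List.replicate_succ', List.foldl_append]

lemma inr_nupow {A : Type*} [NonUnitalRing A] [Module ℂ A]
    [SMulCommClass ℂ A A] [IsScalarTower ℂ A A] (a : A) (m : ℕ) :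
    ((nupow a m : A) : Unitization ℂ A) = (a : Unitization ℂ A) ^ (m + 1) := by
  induction m with
  | zero => simp [nupow_zero]
  | succ k ih => rw [nupow_succ, Unitization.inr_mul, ih, ← pow_succ]

/-- A `Y`-valued polynomial function vanishing everywhere has zero coefficients. -/
lemma vanish_coeff {Y : Type*} [AddCommGroup Y] [Module ℂ Y] (N : ℕ) (c : ℕ → Y)
    (h : ∀ t : ℂ, ∑ j ∈ Finset.range N, t ^ j • c j = 0) :
    ∀ j < N, c j = 0 := by
  intro j hj
  rw [← Module.forall_dual_apply_eq_zero_iff ℂ]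
  intro f
  set p : Polynomial ℂ := ∑ k ∈ Finset.range N, Polynomial.C (f (c k)) * Polynomial.X ^ k with hp
  have hpz : p = 0 := by
    apply Polynomial.funext
    intro t
    have := congrArg f (h t)
    simp only [map_sum, map_smul, map_zero, smul_eq_mul] at this
    rw [hp, Polynomial.eval_finset_sum, Polynomial.eval_zero]
    simp only [Polynomial.eval_mul, Polynomial.eval_C, Polynomial.eval_pow, Polynomial.eval_X]
    simpa [mul_comm] using this
  have hcj : p.coeff j = f (c j) := by
    rw [hp, Polynomial.finset_sum_coeff]
    rw [Finset.sum_eq_single j]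
    · simp
    · intro k _ hkj
      simp [Polynomial.coeff_X_pow, Ne.symm hkj]
    · intro hjn
      exact absurd (Finset.mem_range.mpr hj) hjn
  rw [← hcj, hpz, Polynomial.coeff_zero]

lemma pow_mul_pow_of_absorb {U : Type*} [Monoid U] {x y : U} (hyx : y * x = x) :
    ∀ k j : ℕ, y ^ k * x ^ (j + 1) = x ^ (j + 1) := by
  have hk : ∀ k : ℕ, y ^ k * x = x := by
    intro k
    induction k with
    | zero => simp
    | succ k ih => rw [pow_succ', mul_assoc, ih, hyx]
  intro k j
  have hx : x ^ (j + 1) = x * x ^ j := pow_succ' x j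
  rw [hx, ← mul_assoc, hk]

/-- two linear maps on a (possibly non-unital) complex algebra
agreeing on all `n`-th powers (`n = m + 1 ≥ 1`) are equal, provided every
element `a` admits a local unit `b` with `ab = ba = a`. -/
theorem stmt19 {A Y : Type*} [NonUnitalRing A] [Module ℂ A]
    [SMulCommClass ℂ A A] [IsScalarTower ℂ A A]
    [AddCommGroup Y] [Module ℂ Y]
    (m : ℕ)
    (Φ Ψ : A →ₗ[ℂ] Y) (h : ∀ a : A, Φ (nupow a m) = Ψ (nupow a m))
    (hloc : ∀ a : A, ∃ b : A, a * b = a ∧ b * a = a) :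
    Φ = Ψ := by
  ext a
  obtain ⟨b, hab, hba⟩ := hloc a
  set n := m + 1 with hn
  -- the expansion of `nupow (a + t • b) m`
  have key : ∀ t : ℂ, nupow (a + t • b) m =
      (∑ j ∈ Finset.range n, ((n.choose j : ℂ) * t ^ j) • nupow a (m - j))
        + t ^ n • nupow b m := by
    intro t
    set x : Unitization ℂ A := (a : Unitization ℂ A) with hx
    set y : Unitization ℂ A := (b : Unitization ℂ A) with hy
    have hxy : x * y = x := by rw [hx, hy, ← Unitization.inr_mul, hab]
    have hyx : y * x = x := by rw [hx, hy, ← Unitization.inr_mul, hba]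
    have hc : Commute (t • y) x := by
      unfold Commute SemiconjBy
      rw [smul_mul_assoc, mul_smul_comm, hxy, hyx]
    -- the identity in the unitization
    have hU : ((nupow (a + t • b) m : A) : Unitization ℂ A) =
        (∑ j ∈ Finset.range n,
          ((n.choose j : ℂ) * t ^ j) • ((nupow a (m - j) : A) : Unitization ℂ A))
          + t ^ n • ((nupow b m : A) : Unitization ℂ A) := by
      rw [inr_nupow]
      have hin : ((a + t • b : A) : Unitization ℂ A) = x + t • y := by
        rw [Unitization.inr_add, Unitization.inr_smul, hx, hy]
      rw [hin]
      calc (x + t • y) ^ (m + 1)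
          = ∑ k ∈ Finset.range (n + 1),
              (t • y) ^ k * x ^ (n - k) * (n.choose k : Unitization ℂ A) := by
            rw [add_comm x (t • y), hc.add_pow]
        _ = (∑ j ∈ Finset.range n,
              ((n.choose j : ℂ) * t ^ j) • x ^ (m - j + 1)) + t ^ n • y ^ n := by
            rw [Finset.sum_range_succ]
            congr 1
            · apply Finset.sum_congr rfl
              intro k hk
              rw [Finset.mem_range] at hk
              have hnk : n - k = (m - k) + 1 := by omega
              have hzc : x ^ (m - k + 1) * (n.choose k : Unitization ℂ A) =
                  ((n.choose k : ℂ)) • x ^ (m - k + 1) := by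
                rw [← (Nat.cast_commute (n.choose k) (x ^ (m - k + 1))).eq,
                  ← nsmul_eq_mul, Nat.cast_smul_eq_nsmul]
              rw [hnk, smul_pow, smul_mul_assoc, smul_mul_assoc,
                pow_mul_pow_of_absorb hyx, hzc, smul_smul, mul_comm (t ^ k)]
            · simp [smul_pow, hn]
        _ = (∑ j ∈ Finset.range n,
              ((n.choose j : ℂ) * t ^ j) • ((nupow a (m - j) : A) : Unitization ℂ A))
              + t ^ n • ((nupow b m : A) : Unitization ℂ A) := by
            congr 1
            · apply Finset.sum_congr rfl
              intro k _
              rw [inr_nupow]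
            · rw [inr_nupow, hn]
    have := congrArg (Unitization.sndHom ℂ ℂ A) hU
    simpa only [Unitization.sndHom_apply, map_add, map_sum, map_smul,
      Unitization.snd_inr] using this
  -- apply `Φ - Ψ` to the expansion and read off coefficients
  have hzero : ∀ t : ℂ, ∑ j ∈ Finset.range (n + 1), t ^ j •
      (if j = n then Φ (nupow b m) - Ψ (nupow b m)
       else (n.choose j : ℂ) • (Φ (nupow a (m - j)) - Ψ (nupow a (m - j)))) = 0 := by
    intro t
    have h1 := h (a + t • b)
    have h4 : (0 : Y) = Φ (nupow (a + t • b) m) - Ψ (nupow (a + t • b) m) := by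
      rw [h1, sub_self]
    rw [Finset.sum_range_succ]
    simp only [if_pos rfl]
    rw [Finset.sum_congr rfl (fun k hk => by
      rw [if_neg (by rw [Finset.mem_range] at hk; omega)])]
    rw [h4, key t]
    simp only [map_add, map_sum, map_smul]
    rw [add_sub_add_comm, ← Finset.sum_sub_distrib, ← smul_sub]
    congr 1
    apply Finset.sum_congr rfl
    intro k _
    rw [← smul_sub, smul_smul, mul_comm (t ^ k)]
  have hcoeff := vanish_coeff (n + 1) _ hzero m (by omega)
  rw [if_neg (by omega)] at hcoeff
  have hne : ((n.choose m : ℂ)) ≠ 0 := by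
    have hcm : n.choose m = n := by rw [hn, Nat.choose_succ_self_right]
    rw [hcm, hn]
    exact_mod_cast Nat.succ_ne_zero m
  have hfin : Φ (nupow a (m - m)) - Ψ (nupow a (m - m)) = 0 :=
    smul_right_injective Y hne (by simpa only [smul_zero] using hcoeff)
  simpa [Nat.sub_self, nupow_zero, sub_eq_zero] using hfin
end
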